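/- arXiv:1612.09540 — 6 statements merged into one kernel-verified Lean document; each statement's English description precedes it below -/
import Mathlib

section
/- Let C be a monoidal category with coequalizers and A an algebra in C that is left coflat (i.e., − ⊗ A preserves coequalizers). If X is a right A-module and Y is an A-bimodule, then X ⊗_A Y carries a right A-module structure induced by the right action of A on Y, and the canonical epimorphism q : X ⊗ Y → X ⊗_A Y is right A-linear; moreover (X ⊗_A Y, q) is a coequalizer in the category of right A-modules. -/
/-!
Because `- ⊗ A` preserves coequalizers, `q ▷ A` and `(q ▷ A) ▷ A` are again coequalizers, in
particular epimorphisms. Hence the action `(X ⊗ Y) ⊗ A ⟶ X ⊗ Y` descends along `q ▷ A` as soon as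
both maps `μ ▷ Y` and `α ≫ X ◁ Y.actLeft` of the parallel pair are right `A`-linear (the second by
middle associativity of `Y`), and the module axioms of `X ⊗_A Y` as well as the linearity of every
induced map out of it may be checked after precomposing with these epimorphisms.
-/

open CategoryTheory MonoidalCategory Limits

section CoequalizerAction

variable {C : Type*} [Category C] [MonoidalCategory C] (M : C)
  [PreservesColimitsOfShape WalkingParallelPair (tensorRight M)]

noncomputable def isColimitCoforkWhiskerRight {W Z Q : C} {f g : W ⟶ Z} {π : Z ⟶ Q}
    {w : f ≫ π = g ≫ π} (hc : IsColimit (Cofork.ofπ π w)) :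
    IsColimit (Cofork.ofπ (π ▷ M) (by simp only [← comp_whiskerRight, w]) :
      Cofork (f ▷ M) (g ▷ M)) :=
  isColimitCoforkMapOfIsColimit (tensorRight M) _ hc

variable {W Z : C} {f g : W ⟶ Z} [HasCoequalizer f g] {aW : W ⊗ M ⟶ W} {aZ : Z ⊗ M ⟶ Z}

instance epi_coequalizerπ_whiskerRight : Epi (coequalizer.π f g ▷ M) :=
  Cofork.IsColimit.epi (isColimitCoforkWhiskerRight M (coequalizerIsCoequalizer f g))

instance epi_coequalizerπ_whiskerRight_whiskerRight : Epi ((coequalizer.π f g ▷ M) ▷ M) :=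
  Cofork.IsColimit.epi <| isColimitCoforkWhiskerRight M <|
    isColimitCoforkWhiskerRight M (coequalizerIsCoequalizer f g)

variable (f g) in
noncomputable def coequalizerActRight (hf : (f ▷ M) ≫ aZ = aW ≫ f)
    (hg : (g ▷ M) ≫ aZ = aW ≫ g) :
    coequalizer f g ⊗ M ⟶ coequalizer f g :=
  Cofork.IsColimit.desc (isColimitCoforkWhiskerRight M (coequalizerIsCoequalizer f g))
    (aZ ≫ coequalizer.π f g) (by
      rw [reassoc_of% hf, reassoc_of% hg, coequalizer.condition])

variable {M} (hf : (f ▷ M) ≫ aZ = aW ≫ f) (hg : (g ▷ M) ≫ aZ = aW ≫ g)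

theorem whiskerRight_π_coequalizerActRight :
    (coequalizer.π f g ▷ M) ≫ coequalizerActRight M f g hf hg = aZ ≫ coequalizer.π f g :=
  Cofork.IsColimit.π_desc' (isColimitCoforkWhiskerRight M (coequalizerIsCoequalizer f g)) _ _

theorem whiskerLeft_one_coequalizerActRight [MonObj M]
    (haZ : (Z ◁ MonObj.one) ≫ aZ = (ρ_ Z).hom) :
    (coequalizer f g ◁ MonObj.one) ≫ coequalizerActRight M f g hf hg = (ρ_ _).hom := by
  have : Epi (coequalizer.π f g ▷ 𝟙_ C) := by
    rw [whiskerRight_id]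
    infer_instance
  rw [← cancel_epi (coequalizer.π f g ▷ 𝟙_ C), ← whisker_exchange_assoc,
    whiskerRight_π_coequalizerActRight, reassoc_of% haZ, rightUnitor_naturality]

theorem coequalizerActRight_assoc [MonObj M]
    (haZ : (α_ Z M M).inv ≫ (aZ ▷ M) ≫ aZ = (Z ◁ MonObj.mul) ≫ aZ) :
    (α_ _ M M).inv ≫ (coequalizerActRight M f g hf hg ▷ M) ≫ coequalizerActRight M f g hf hg =
      (coequalizer f g ◁ MonObj.mul) ≫ coequalizerActRight M f g hf hg := by
  rw [Iso.inv_comp_eq, ← cancel_epi ((coequalizer.π f g ▷ M) ▷ M),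
    ← comp_whiskerRight_assoc, whiskerRight_π_coequalizerActRight, comp_whiskerRight_assoc,
    whiskerRight_π_coequalizerActRight, associator_naturality_left_assoc,
    ← whisker_exchange_assoc, whiskerRight_π_coequalizerActRight, ← reassoc_of% haZ,
    Iso.hom_inv_id_assoc]

theorem coequalizerActRight_comp_desc {P : C} {aP : P ⊗ M ⟶ P} {h : Z ⟶ P}
    (hfg : f ≫ h = g ≫ h) (hh : (h ▷ M) ≫ aP = aZ ≫ h) :
    coequalizerActRight M f g hf hg ≫ coequalizer.desc h hfg =
      (coequalizer.desc h hfg ▷ M) ≫ aP := by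
  rw [← cancel_epi (coequalizer.π f g ▷ M),
    reassoc_of% (whiskerRight_π_coequalizerActRight hf hg), coequalizer.π_desc,
    ← comp_whiskerRight_assoc, coequalizer.π_desc, hh]

end CoequalizerAction

namespace Bimod

variable {C : Type*} [Category C] [MonoidalCategory C] {A B : Mon C}

def whiskerLeftActRight (X : C) (Y : Bimod A B) : (X ⊗ Y.X) ⊗ B.X ⟶ X ⊗ Y.X :=
  (α_ X Y.X B.X).hom ≫ (X ◁ Y.actRight)

variable (X : C) (Y : Bimod A B)

theorem whiskerLeftActRight_one :
    ((X ⊗ Y.X) ◁ B.mon.one) ≫ whiskerLeftActRight X Y = (ρ_ _).hom := by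
  rw [whiskerLeftActRight, tensor_whiskerLeft, Category.assoc, Category.assoc,
    Iso.inv_hom_id_assoc, ← whiskerLeft_comp, Y.actRight_one, whiskerLeft_rightUnitor,
    Iso.hom_inv_id_assoc]

theorem whiskerLeftActRight_assoc :
    (α_ _ B.X B.X).inv ≫ (whiskerLeftActRight X Y ▷ B.X) ≫ whiskerLeftActRight X Y =
      ((X ⊗ Y.X) ◁ B.mon.mul) ≫ whiskerLeftActRight X Y := by
  simp only [whiskerLeftActRight, comp_whiskerRight, whisker_assoc, Category.assoc,
    Iso.inv_hom_id_assoc, pentagon_inv_hom_hom_hom_inv_assoc, tensor_whiskerLeft,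
    Iso.cancel_iso_hom_left]
  simp only [← whiskerLeft_comp, right_assoc]

theorem whiskerLeftActRight_naturality {X' : C} (u : X' ⟶ X) :
    ((u ▷ Y.X) ▷ B.X) ≫ whiskerLeftActRight X Y = whiskerLeftActRight X' Y ≫ (u ▷ Y.X) := by
  rw [whiskerLeftActRight, whiskerLeftActRight, associator_naturality_left_assoc,
    ← whisker_exchange, Category.assoc]

theorem whiskerLeftActRight_actLeft :
    (((α_ X A.X Y.X).hom ≫ (X ◁ Y.actLeft)) ▷ B.X) ≫ whiskerLeftActRight X Y =
      whiskerLeftActRight (X ⊗ A.X) Y ≫ (α_ X A.X Y.X).hom ≫ (X ◁ Y.actLeft) := by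
  simp only [whiskerLeftActRight, comp_whiskerRight, whisker_assoc, Category.assoc,
    Iso.inv_hom_id_assoc, tensor_whiskerLeft]
  rw [← whiskerLeft_comp, middle_assoc, whiskerLeft_comp, whiskerLeft_comp, pentagon_assoc]

end Bimod

theorem stmt6_general {C : Type*} [Category C] [MonoidalCategory C] [HasCoequalizers C]
    (A : Mon C)
    (coflatA : PreservesColimitsOfShape WalkingParallelPair
      (MonoidalCategory.tensorRight A.X))
    (X : C) (μ : X ⊗ A.X ⟶ X) (Y : Bimod A A) :
    ∃ act : (coequalizer (μ ▷ Y.X) ((α_ X A.X Y.X).hom ≫ (X ◁ Y.actLeft))) ⊗ A.X ⟶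
        coequalizer (μ ▷ Y.X) ((α_ X A.X Y.X).hom ≫ (X ◁ Y.actLeft)),
      -- right `A`-module axioms for `X ⊗_A Y`
      ((_ ◁ A.mon.one) ≫ act = (ρ_ _).hom) ∧
      ((α_ _ A.X A.X).inv ≫ (act ▷ A.X) ≫ act = (_ ◁ A.mon.mul) ≫ act) ∧
      -- the canonical epimorphism `q` is right `A`-linear
      ((coequalizer.π _ _ ▷ A.X) ≫ act =
        (α_ X Y.X A.X).hom ≫ (X ◁ Y.actRight) ≫ coequalizer.π _ _) ∧
      -- `(X ⊗_A Y, q)` is a coequalizer in the category of right `A`-modules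
      (∀ (P : C) (actP : P ⊗ A.X ⟶ P),
        ((P ◁ A.mon.one) ≫ actP = (ρ_ P).hom) →
        ((α_ P A.X A.X).inv ≫ (actP ▷ A.X) ≫ actP = (P ◁ A.mon.mul) ≫ actP) →
        ∀ h : X ⊗ Y.X ⟶ P,
          (μ ▷ Y.X) ≫ h = ((α_ X A.X Y.X).hom ≫ (X ◁ Y.actLeft)) ≫ h →
          ((h ▷ A.X) ≫ actP = (α_ X Y.X A.X).hom ≫ (X ◁ Y.actRight) ≫ h) →
          ∃! g : coequalizer (μ ▷ Y.X) ((α_ X A.X Y.X).hom ≫ (X ◁ Y.actLeft)) ⟶ P,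
            coequalizer.π _ _ ≫ g = h ∧ act ≫ g = (g ▷ A.X) ≫ actP) := by
  have := coflatA
  have hf := Bimod.whiskerLeftActRight_naturality X Y μ
  have hg := Bimod.whiskerLeftActRight_actLeft X Y
  refine ⟨coequalizerActRight A.X _ _ hf hg,
    whiskerLeft_one_coequalizerActRight hf hg (Bimod.whiskerLeftActRight_one X Y),
    coequalizerActRight_assoc hf hg (Bimod.whiskerLeftActRight_assoc X Y),
    (whiskerRight_π_coequalizerActRight hf hg).trans (Category.assoc _ _ _), ?_⟩
  intro P actP _ _ h hfg hh
  exact ⟨coequalizer.desc h hfg,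
    ⟨coequalizer.π_desc h hfg, coequalizerActRight_comp_desc hf hg hfg
      (hh.trans (Category.assoc _ _ _).symm)⟩,
    fun g' ⟨hg', _⟩ => coequalizer.hom_ext (hg'.trans (coequalizer.π_desc h hfg).symm)⟩

/-- if `A` is a left coflat algebra (`− ⊗ A` preserves coequalizers), `X` a right
`A`-module and `Y` an `A`-bimodule, then `X ⊗_A Y` carries a right `A`-module structure induced
by the right `A`-action on `Y`, the canonical epimorphism `q : X ⊗ Y → X ⊗_A Y` is right
`A`-linear, and `(X ⊗_A Y, q)` is a coequalizer in the category of right `A`-modules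
(expressed by the universal property among right `A`-linear morphisms). -/
theorem stmt6 {C : Type*} [Category C] [MonoidalCategory C] [HasCoequalizers C]
    (A : Mon C)
    (coflatA : PreservesColimitsOfShape WalkingParallelPair
      (MonoidalCategory.tensorRight A.X))
    (X : C) (μ : X ⊗ A.X ⟶ X)
    (act_one : (X ◁ A.mon.one) ≫ μ = (ρ_ X).hom)
    (act_assoc : (α_ X A.X A.X).inv ≫ (μ ▷ A.X) ≫ μ = (X ◁ A.mon.mul) ≫ μ) (Y : Bimod A A) :
    ∃ act : (coequalizer (μ ▷ Y.X) ((α_ X A.X Y.X).hom ≫ (X ◁ Y.actLeft))) ⊗ A.X ⟶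
        coequalizer (μ ▷ Y.X) ((α_ X A.X Y.X).hom ≫ (X ◁ Y.actLeft)),
      -- right `A`-module axioms for `X ⊗_A Y`
      ((_ ◁ A.mon.one) ≫ act = (ρ_ _).hom) ∧
      ((α_ _ A.X A.X).inv ≫ (act ▷ A.X) ≫ act = (_ ◁ A.mon.mul) ≫ act) ∧
      -- the canonical epimorphism `q` is right `A`-linear
      ((coequalizer.π _ _ ▷ A.X) ≫ act =
        (α_ X Y.X A.X).hom ≫ (X ◁ Y.actRight) ≫ coequalizer.π _ _) ∧
      -- `(X ⊗_A Y, q)` is a coequalizer in the category of right `A`-modules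
      (∀ (P : C) (actP : P ⊗ A.X ⟶ P),
        ((P ◁ A.mon.one) ≫ actP = (ρ_ P).hom) →
        ((α_ P A.X A.X).inv ≫ (actP ▷ A.X) ≫ actP = (P ◁ A.mon.mul) ≫ actP) →
        ∀ h : X ⊗ Y.X ⟶ P,
          (μ ▷ Y.X) ≫ h = ((α_ X A.X Y.X).hom ≫ (X ◁ Y.actLeft)) ≫ h →
          ((h ▷ A.X) ≫ actP = (α_ X Y.X A.X).hom ≫ (X ◁ Y.actRight) ≫ h) →
          ∃! g : coequalizer (μ ▷ Y.X) ((α_ X A.X Y.X).hom ≫ (X ◁ Y.actLeft)) ⟶ P,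
            coequalizer.π _ _ ≫ g = h ∧ act ≫ g = (g ▷ A.X) ≫ actP) :=
  stmt6_general A coflatA X μ Y
end

section
/- Let C be a monoidal category with coequalizers and A a left coflat algebra in C. If X and Y are A-bimodules that are left coflat as objects of C and robust as left A-modules, then X ⊗_A Y is left coflat as an object of C. -/
open CategoryTheory MonoidalCategory Limits

/-- `(f, g, π)` is a coequalizer diagram. -/
def IsCoeq {C : Type*} [Category C] {M N P : C} (f g : M ⟶ N) (π : N ⟶ P) : Prop :=
  ∃ w : f ≫ π = g ≫ π, Nonempty (IsColimit (Cofork.ofπ π w))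

/-- A left `A`-module `(Y, ν)` is robust: for every right `A`-module `(W, actW)` and any
coequalizer `(W ⊗_A Y, π)` of the canonical pair, tensoring on the left with any `M` again
gives a coequalizer. -/
def Robust {C : Type*} [Category C] [MonoidalCategory C] (A : Mon C)
    (Y : C) (ν : A.X ⊗ Y ⟶ Y) : Prop :=
  ∀ (M W : C) (actW : W ⊗ A.X ⟶ W),
    ((W ◁ (MonObj.one (X := A.X))) ≫ actW = (ρ_ W).hom) →
    ((α_ W A.X A.X).inv ≫ (actW ▷ A.X) ≫ actW = (W ◁ (MonObj.mul (X := A.X))) ≫ actW) →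
    ∀ (Q : C) (π : W ⊗ Y ⟶ Q),
      IsCoeq (actW ▷ Y) ((α_ W A.X Y).hom ≫ (W ◁ ν)) π →
      IsCoeq (M ◁ (actW ▷ Y)) (M ◁ ((α_ W A.X Y).hom ≫ (W ◁ ν))) (M ◁ π)

/-!
Write `T = X ⊗_A Y` for the coequalizer `k : X ⊗ Y ⟶ T` of `s, t : (X ⊗ A) ⊗ Y ⇉ X ⊗ Y`.
Robustness of `Y` says that `M ◁ k` is a coequalizer of `M ◁ s, M ◁ t` for every `M`, and
coflatness of `X`, `A`, `Y` says that `- ⊗ (X ⊗ Y)` and `- ⊗ ((X ⊗ A) ⊗ Y)` preserve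
coequalizers. Given a coequalizer `π : N ⟶ Q` of `f, g`, the square of `N ⊗ (X ⊗ Y)`,
`N ⊗ T`, `Q ⊗ (X ⊗ Y)`, `Q ⊗ T` is then a 3×3 diagram whose rows and inner column are
coequalizers, so a map out of `N ⊗ T` equalizing `f ▷ T, g ▷ T` descends first along
`π ▷ (X ⊗ Y)` and then along `Q ◁ k`.
-/

section Coequalizers

variable {C : Type*} [Category C]

lemma IsCoeq.epi {M N P : C} {f g : M ⟶ N} {π : N ⟶ P} (h : IsCoeq f g π) : Epi π := by
  obtain ⟨_, ⟨hc⟩⟩ := h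
  exact ⟨fun a b hab => Cofork.IsColimit.hom_ext hc (by simpa using hab)⟩

lemma isCoeq_coequalizer_π {M N : C} (f g : M ⟶ N) [HasCoequalizer f g] :
    IsCoeq f g (coequalizer.π f g) :=
  ⟨coequalizer.condition f g, ⟨coequalizerIsCoequalizer f g⟩⟩

lemma preservesColimitsOfShape_walkingParallelPair_of_isCoeq_map [HasCoequalizers C]
    {D : Type*} [Category D] (F : C ⥤ D)
    (hF : ∀ {M N P : C} (f g : M ⟶ N) (π : N ⟶ P),
      IsCoeq f g π → IsCoeq (F.map f) (F.map g) (F.map π)) :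
    PreservesColimitsOfShape WalkingParallelPair F := by
  refine ⟨fun {K} => ?_⟩
  suffices PreservesColimit (parallelPair (K.map .left) (K.map .right)) F from
    preservesColimit_of_iso_diagram F (diagramIsoParallelPair K).symm
  set f := K.map .left
  set g := K.map .right
  obtain ⟨_, ⟨hc⟩⟩ := hF f g _ (isCoeq_coequalizer_π f g)
  exact preservesColimit_of_preserves_colimit_cocone (coequalizerIsCoequalizer f g)
    ((isColimitMapCoconeCoforkEquiv F (coequalizer.condition f g)).symm hc)

end Coequalizers

section Monoidal

variable {C : Type*} [Category C] [MonoidalCategory C]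

lemma preservesColimitsOfShape_tensorRight_tensorObj {J : Type*} [Category J] {Z W : C}
    [PreservesColimitsOfShape J (tensorRight Z)] [PreservesColimitsOfShape J (tensorRight W)] :
    PreservesColimitsOfShape J (tensorRight (Z ⊗ W)) :=
  preservesColimitsOfShape_of_natIso (tensorRightTensor Z W).symm

lemma IsCoeq.whiskerRight {M N P : C} {f g : M ⟶ N} {π : N ⟶ P} (h : IsCoeq f g π) (Z : C)
    [PreservesColimitsOfShape WalkingParallelPair (tensorRight Z)] :
    IsCoeq (f ▷ Z) (g ▷ Z) (π ▷ Z) := by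
  obtain ⟨w, ⟨hc⟩⟩ := h
  exact ⟨by rw [← comp_whiskerRight, w, comp_whiskerRight],
    ⟨isColimitCoforkMapOfIsColimit (tensorRight Z) w hc⟩⟩

variable {V W T : C} {s t : V ⟶ W} {k : W ⟶ T}
  [PreservesColimitsOfShape WalkingParallelPair (tensorRight V)]
  [PreservesColimitsOfShape WalkingParallelPair (tensorRight W)]

lemma IsCoeq.whiskerRight_of_forall_isCoeq_whiskerLeft
    (hk : ∀ M : C, IsCoeq (M ◁ s) (M ◁ t) (M ◁ k))
    {M N Q : C} {f g : M ⟶ N} {π : N ⟶ Q} (hπ : IsCoeq f g π) :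
    IsCoeq (f ▷ T) (g ▷ T) (π ▷ T) := by
  obtain ⟨wN, ⟨hNk⟩⟩ := hk N
  obtain ⟨_, ⟨hQk⟩⟩ := hk Q
  obtain ⟨_, ⟨hπW⟩⟩ := hπ.whiskerRight W
  have : Epi (N ◁ k) := (hk N).epi
  have : Epi (Q ◁ k) := (hk Q).epi
  have : Epi (π ▷ W) := (hπ.whiskerRight W).epi
  have : Epi (π ▷ V) := (hπ.whiskerRight V).epi
  have : Epi (π ▷ T) := by
    have : Epi (N ◁ k ≫ π ▷ T) := by rw [whisker_exchange]; infer_instance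
    exact epi_of_epi (N ◁ k) _
  refine ⟨by rw [← comp_whiskerRight, ← comp_whiskerRight, hπ.fst], ⟨?_⟩⟩
  refine Cofork.IsColimit.mk' _ fun c => ?_
  obtain ⟨u, hu⟩ := Cofork.IsColimit.desc' hπW (N ◁ k ≫ c.π) (by
    simp only [← Category.assoc, ← whisker_exchange]
    simp only [Category.assoc, c.condition])
  have hus : Q ◁ s ≫ u = Q ◁ t ≫ u := by
    rw [← cancel_epi (π ▷ V)]
    simp only [← Category.assoc, ← whisker_exchange]
    simp only [Category.assoc, Cofork.π_ofπ] at hu ⊢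
    rw [hu, ← Category.assoc, wN, Category.assoc]
  obtain ⟨v, hv⟩ := Cofork.IsColimit.desc' hQk u hus
  have hfac : π ▷ T ≫ v = c.π := by
    simp only [Cofork.π_ofπ] at hu hv
    rw [← cancel_epi (N ◁ k), ← Category.assoc, whisker_exchange, Category.assoc, hv, hu]
  exact ⟨v, hfac, fun hm => (cancel_epi (π ▷ T)).1 (hm.trans hfac.symm)⟩

lemma preservesColimitsOfShape_tensorRight_of_forall_isCoeq_whiskerLeft [HasCoequalizers C]
    (hk : ∀ M : C, IsCoeq (M ◁ s) (M ◁ t) (M ◁ k)) :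
    PreservesColimitsOfShape WalkingParallelPair (tensorRight T) :=
  preservesColimitsOfShape_walkingParallelPair_of_isCoeq_map _ fun _ _ _ hπ =>
    hπ.whiskerRight_of_forall_isCoeq_whiskerLeft hk

end Monoidal

theorem stmt7_general {C : Type*} [Category C] [MonoidalCategory C] [HasCoequalizers C]
    (A : Mon C)
    (coflatA : PreservesColimitsOfShape WalkingParallelPair
      (MonoidalCategory.tensorRight A.X))
    (X Y : Bimod A A)
    (coflatX : PreservesColimitsOfShape WalkingParallelPair
      (MonoidalCategory.tensorRight X.X))
    (coflatY : PreservesColimitsOfShape WalkingParallelPair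
      (MonoidalCategory.tensorRight Y.X))
    (robustY : Robust A Y.X Y.actLeft) :
    Nonempty (PreservesColimitsOfShape WalkingParallelPair
      (MonoidalCategory.tensorRight
        (coequalizer (X.actRight ▷ Y.X) ((α_ X.X A.X Y.X).hom ≫ (X.X ◁ Y.actLeft))))) := by
  have : PreservesColimitsOfShape WalkingParallelPair (tensorRight (X.X ⊗ A.X)) :=
    preservesColimitsOfShape_tensorRight_tensorObj
  have : PreservesColimitsOfShape WalkingParallelPair (tensorRight ((X.X ⊗ A.X) ⊗ Y.X)) :=
    preservesColimitsOfShape_tensorRight_tensorObj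
  have : PreservesColimitsOfShape WalkingParallelPair (tensorRight (X.X ⊗ Y.X)) :=
    preservesColimitsOfShape_tensorRight_tensorObj
  exact ⟨preservesColimitsOfShape_tensorRight_of_forall_isCoeq_whiskerLeft fun M =>
    robustY M X.X X.actRight X.actRight_one X.right_assoc.symm _ _
      (isCoeq_coequalizer_π _ _)⟩

/-- over a left coflat algebra `A`, if `X` and `Y` are `A`-bimodules which are
left coflat in `C` and robust as left `A`-modules, then `X ⊗_A Y` is left coflat in `C`. -/
theorem stmt7 {C : Type*} [Category C] [MonoidalCategory C] [HasCoequalizers C]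
    (A : Mon C)
    (coflatA : PreservesColimitsOfShape WalkingParallelPair
      (MonoidalCategory.tensorRight A.X))
    (X Y : Bimod A A)
    (coflatX : PreservesColimitsOfShape WalkingParallelPair
      (MonoidalCategory.tensorRight X.X))
    (coflatY : PreservesColimitsOfShape WalkingParallelPair
      (MonoidalCategory.tensorRight Y.X))
    (robustX : Robust A X.X X.actLeft) (robustY : Robust A Y.X Y.actLeft) :
    Nonempty (PreservesColimitsOfShape WalkingParallelPair
      (MonoidalCategory.tensorRight
        (coequalizer (X.actRight ▷ Y.X) ((α_ X.X A.X Y.X).hom ≫ (X.X ◁ Y.actLeft))))) :=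
  stmt7_general A coflatA X Y coflatX coflatY robustY
end

section
/- Let A be an algebra in a monoidal category C and (X, ψ) a right transfer morphism through A (ψ : X⊗A → A⊗X satisfying ψ ∘ (X⊗m) = (m⊗X) ∘ (A⊗ψ) ∘ (ψ⊗A) and ψ ∘ (X⊗η) = η⊗X). If X ⊣ Y in C with unit b and counit d, then φ = (Y⊗A⊗d) ∘ (Y⊗ψ⊗Y) ∘ (b⊗A⊗Y) : A⊗Y → Y⊗A is a left transfer morphism through A, i.e., φ ∘ (m⊗Y) = (Y⊗m) ∘ (φ⊗A) ∘ (A⊗φ) and φ ∘ (η⊗Y) = Y⊗η. -/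
/-!
Regard `C` as a bicategory with one object. There `X ⊣ Y` is an adjunction, and `φ` is the
mate of `ψ` under it. The mates correspondence is a bijection that commutes with whiskering by
2-cells and with vertical pasting of squares. It therefore sends each transfer axiom for `φ`
to the matching axiom for `ψ`.
-/

open CategoryTheory MonoidalCategory

namespace CategoryTheory.Bicategory

section

variable {B : Type*} [Bicategory B] {c d e f : B} {g g' : c ⟶ e} {h h' : d ⟶ f}
  {l₁ : c ⟶ d} {r₁ : d ⟶ c} {l₂ : e ⟶ f} {r₂ : f ⟶ e} (adj₁ : l₁ ⊣ r₁) (adj₂ : l₂ ⊣ r₂)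

lemma mateEquiv_whiskerRight_comp (u : g' ⟶ g) (α : g ≫ l₂ ⟶ l₁ ≫ h) :
    mateEquiv adj₁ adj₂ (u ▷ l₂ ≫ α) = r₁ ◁ u ≫ mateEquiv adj₁ adj₂ α := by
  simp only [mateEquiv_apply']
  calc _ = 𝟙 (r₁ ≫ g') ⊗≫ ((r₁ ≫ g') ◁ adj₂.unit ≫ (r₁ ◁ u) ▷ (l₂ ≫ r₂)) ⊗≫ r₁ ◁ α ▷ r₂ ⊗≫
        adj₁.counit ▷ h ▷ r₂ ⊗≫ 𝟙 (h ≫ r₂) := by bicategory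
    _ = _ := by rw [whisker_exchange]; bicategory

lemma mateEquiv_comp_whiskerLeft (α : g ≫ l₂ ⟶ l₁ ≫ h) (v : h ⟶ h') :
    mateEquiv adj₁ adj₂ (α ≫ l₁ ◁ v) = mateEquiv adj₁ adj₂ α ≫ v ▷ r₂ := by
  simp only [mateEquiv_apply']
  calc _ = 𝟙 (r₁ ≫ g) ⊗≫ r₁ ◁ g ◁ adj₂.unit ⊗≫ r₁ ◁ α ▷ r₂ ⊗≫
        ((r₁ ≫ l₁) ◁ (v ▷ r₂) ≫ adj₁.counit ▷ (h' ≫ r₂)) ⊗≫ 𝟙 (h' ≫ r₂) := by bicategory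
    _ = _ := by rw [whisker_exchange]; bicategory

end

variable {B : Type*} [Bicategory B] {a b : B} {l : a ⟶ b} {r : b ⟶ a} (adj : l ⊣ r)
  {s : a ⟶ a} {t : b ⟶ b} (φ : s ≫ l ⟶ l ≫ t)

lemma mul_compat_iff_mateEquiv_mul_compat (μs : s ≫ s ⟶ s) (μt : t ≫ t ⟶ t) :
    (α_ s s l).inv ≫ μs ▷ l ≫ φ =
        s ◁ φ ≫ (α_ s l t).inv ≫ φ ▷ t ≫ (α_ l t t).hom ≫ l ◁ μt ↔
      r ◁ μs ≫ mateEquiv adj adj φ =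
        (α_ r s s).inv ≫ mateEquiv adj adj φ ▷ s ≫ (α_ t r s).hom ≫
          t ◁ mateEquiv adj adj φ ≫ (α_ t t r).inv ≫ μt ▷ r := by
  have hvcomp : (α_ s s l).hom ≫ s ◁ φ ≫ (α_ s l t).inv ≫ φ ▷ t ≫ (α_ l t t).hom ≫ l ◁ μt =
      leftAdjointSquare.vcomp φ φ ≫ l ◁ μt := by
    simp only [leftAdjointSquare.vcomp, Category.assoc]
  rw [← cancel_epi (α_ s s l).hom, ← (mateEquiv adj adj).injective.eq_iff,
    Iso.hom_inv_id_assoc, mateEquiv_whiskerRight_comp, hvcomp, mateEquiv_comp_whiskerLeft,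
    mateEquiv_vcomp adj adj adj, rightAdjointSquare.vcomp]
  simp only [Category.assoc]

lemma one_compat_iff_mateEquiv_one_compat (ηs : 𝟙 a ⟶ s) (ηt : 𝟙 b ⟶ t) :
    ηs ▷ l ≫ φ = (leftUnitor l).hom ≫ (rightUnitor l).inv ≫ l ◁ ηt ↔
      r ◁ ηs ≫ mateEquiv adj adj φ = (rightUnitor r).hom ≫ (leftUnitor r).inv ≫ ηt ▷ r := by
  rw [← (mateEquiv adj adj).injective.eq_iff, mateEquiv_whiskerRight_comp, ← Category.assoc,
    mateEquiv_comp_whiskerLeft, mateEquiv_leftUnitor_hom_rightUnitor_inv, Category.assoc]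

end CategoryTheory.Bicategory

namespace CategoryTheory.MonoidalSingleObj

variable {C : Type*} [Category C] [MonoidalCategory C]

/-- Composition of 1-cells is `⊗` in diagrammatic order, so the unit `𝟙_ C ⟶ Y ⊗ X` makes `Y`
the left adjoint of `X` in the bicategory, while the monoidal convention writes `X ⊣ Y`. -/
def adjunction {X Y : C} (b : 𝟙_ C ⟶ Y ⊗ X) (d : X ⊗ Y ⟶ 𝟙_ C)
    (tri1 : (λ_ Y).inv ≫ (b ▷ Y) ≫ (α_ Y X Y).hom ≫ (Y ◁ d) ≫ (ρ_ Y).hom = 𝟙 Y)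
    (tri2 : (ρ_ X).inv ≫ (X ◁ b) ≫ (α_ X Y X).inv ≫ (d ▷ X) ≫ (λ_ X).hom = 𝟙 X) :
    Bicategory.Adjunction (B := MonoidalSingleObj C) (a := .star C) (b := .star C) Y X where
  unit := b
  counit := d
  left_triangle := by
    show b ▷ Y ⊗≫ Y ◁ d = (λ_ Y).hom ≫ (ρ_ Y).inv
    rw [← cancel_epi (λ_ Y).inv, ← cancel_mono (ρ_ Y).hom]
    simpa [monoidalComp] using tri1
  right_triangle := by
    show X ◁ b ⊗≫ d ▷ X = (ρ_ X).hom ≫ (λ_ X).inv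
    rw [← cancel_epi (ρ_ X).inv, ← cancel_mono (λ_ X).hom]
    simpa [monoidalComp] using tri2

lemma mateEquiv_symm_apply_eq {X Y P Q : C}
    (adj : Bicategory.Adjunction (B := MonoidalSingleObj C) (a := .star C) (b := .star C) Y X)
    (ψ : X ⊗ P ⟶ Q ⊗ X) :
    (Bicategory.mateEquiv (g := P) (h := Q) adj adj).symm ψ =
      (λ_ (P ⊗ Y)).inv ≫ (adj.unit ▷ (P ⊗ Y)) ≫ (α_ Y X (P ⊗ Y)).hom ≫
        (Y ◁ (α_ X P Y).inv) ≫ (Y ◁ (ψ ▷ Y)) ≫ (Y ◁ (α_ Q X Y).hom) ≫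
        (Y ◁ (Q ◁ adj.counit)) ≫ (Y ◁ (ρ_ Q).hom) := by
  simp only [Bicategory.mateEquiv_symm_apply, Bicategory.Adjunction.homEquiv₁_symm_apply,
    Bicategory.Adjunction.homEquiv₂_symm_apply]
  unfold_projs
  monoidal

end CategoryTheory.MonoidalSingleObj

/-- if `(X, ψ)` is a right transfer morphism through `A` and `X ⊣ Y` in `C`
(unit `b`, counit `d`), then `φ = (Y⊗A⊗d) ∘ (Y⊗ψ⊗Y) ∘ (b⊗A⊗Y) : A⊗Y ⟶ Y⊗A` is a left
transfer morphism through `A`. -/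
theorem stmt9 {C : Type*} [Category C] [MonoidalCategory C]
    (A : Mon C) (X Y : C) (ψ : X ⊗ A.X ⟶ A.X ⊗ X)
    -- right transfer morphism axioms
    (hψm : (X ◁ A.mon.mul) ≫ ψ =
      (α_ X A.X A.X).inv ≫ (ψ ▷ A.X) ≫ (α_ A.X X A.X).hom ≫ (A.X ◁ ψ) ≫
        (α_ A.X A.X X).inv ≫ (A.mon.mul ▷ X))
    (hψu : (X ◁ A.mon.one) ≫ ψ = (ρ_ X).hom ≫ (λ_ X).inv ≫ (A.mon.one ▷ X))
    -- adjunction `X ⊣ Y`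
    (b : 𝟙_ C ⟶ Y ⊗ X) (d : X ⊗ Y ⟶ 𝟙_ C)
    (tri1 : (λ_ Y).inv ≫ (b ▷ Y) ≫ (α_ Y X Y).hom ≫ (Y ◁ d) ≫ (ρ_ Y).hom = 𝟙 Y)
    (tri2 : (ρ_ X).inv ≫ (X ◁ b) ≫ (α_ X Y X).inv ≫ (d ▷ X) ≫ (λ_ X).hom = 𝟙 X) :
    ∀ φ : A.X ⊗ Y ⟶ Y ⊗ A.X,
      φ = (λ_ (A.X ⊗ Y)).inv ≫ (b ▷ (A.X ⊗ Y)) ≫ (α_ Y X (A.X ⊗ Y)).hom ≫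
            (Y ◁ (α_ X A.X Y).inv) ≫ (Y ◁ (ψ ▷ Y)) ≫ (Y ◁ (α_ A.X X Y).hom) ≫
            (Y ◁ (A.X ◁ d)) ≫ (Y ◁ (ρ_ A.X).hom) →
      -- left transfer morphism axioms for `φ`
      ((α_ A.X A.X Y).inv ≫ (A.mon.mul ▷ Y) ≫ φ =
        (A.X ◁ φ) ≫ (α_ A.X Y A.X).inv ≫ (φ ▷ A.X) ≫ (α_ Y A.X A.X).hom ≫
          (Y ◁ A.mon.mul)) ∧
      ((A.mon.one ▷ Y) ≫ φ = (λ_ Y).hom ≫ (ρ_ Y).inv ≫ (Y ◁ A.mon.one)) := by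
  intro φ hφ
  let adj := MonoidalSingleObj.adjunction b d tri1 tri2
  have hmate : Bicategory.mateEquiv (g := A.X) (h := A.X) adj adj φ = ψ := by
    rw [← Equiv.eq_symm_apply, MonoidalSingleObj.mateEquiv_symm_apply_eq, hφ]
    rfl
  constructor
  · exact (Bicategory.mul_compat_iff_mateEquiv_mul_compat adj φ A.mon.mul A.mon.mul).2
      (hmate ▸ hψm)
  · exact (Bicategory.one_compat_iff_mateEquiv_one_compat adj φ A.mon.one A.mon.one).2
      (hmate ▸ hψu)
end

section
/- Let A be an algebra in a monoidal category C. If (X, ψ) and (X', ψ') are right transfer morphisms through A with X ⊣ Y and X' ⊣ Y' in C, and φ, φ' are the induced left transfer morphisms on Y, Y', then Y' ⊗ Y is a right adjoint of X ⊗ X' and the induced left transfer morphism on Y'⊗Y from ψ·ψ' = (ψ⊗X') ∘ (X⊗ψ') equals the composite φ'·φ = (Y'⊗φ) ∘ (φ'⊗Y) of the two left transfer morphisms. -/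
/-!
An adjunction `X ⊣ Y` is an exact pairing `(Y, X)`, and the composite adjunction
`X ⊗ X' ⊣ Y' ⊗ Y` is the tensor product of the pairings, so its triangle identities are
Mathlib's. The induced left transfer morphism is the mate of `ψ`, and mates respect horizontal
composition: by the interchange law `ψ'` slides past the unit of `X ⊣ Y` and the counit of
`X' ⊣ Y'` past `ψ`, after which the string diagram of the mate of `ψ·ψ'` splits into `φ'`
followed by `φ`.
-/

open CategoryTheory MonoidalCategory

namespace CategoryTheory

theorem Iso.inv_comp_comp_hom_eq_id_iff {C : Type*} [Category C] {P Q Y : C} (e : P ≅ Y)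
    (e' : Q ≅ Y) (f : P ⟶ Q) : e.inv ≫ f ≫ e'.hom = 𝟙 Y ↔ f = e.hom ≫ e'.inv := by
  rw [Iso.inv_comp_eq, Category.comp_id, ← Iso.eq_comp_inv]

variable {C : Type*} [Category C] [MonoidalCategory C]

abbrev ExactPairing.ofTriangles {X Y : C} (b : 𝟙_ C ⟶ Y ⊗ X) (d : X ⊗ Y ⟶ 𝟙_ C)
    (tri1 : (λ_ Y).inv ≫ (b ▷ Y) ≫ (α_ Y X Y).hom ≫ (Y ◁ d) ≫ (ρ_ Y).hom = 𝟙 Y)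
    (tri2 : (ρ_ X).inv ≫ (X ◁ b) ≫ (α_ X Y X).inv ≫ (d ▷ X) ≫ (λ_ X).hom = 𝟙 X) :
    ExactPairing Y X where
  coevaluation' := b
  evaluation' := d
  coevaluation_evaluation' := (Iso.inv_comp_comp_hom_eq_id_iff _ _ _).mp (by simpa using tri2)
  evaluation_coevaluation' := (Iso.inv_comp_comp_hom_eq_id_iff _ _ _).mp (by simpa using tri1)

theorem ExactPairing.evaluation_coevaluation_eq_id (Y X : C) [ExactPairing Y X] :
    (λ_ Y).inv ≫ (η_ Y X ▷ Y) ≫ (α_ Y X Y).hom ≫ (Y ◁ ε_ Y X) ≫ (ρ_ Y).hom = 𝟙 Y := by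
  simp

theorem ExactPairing.coevaluation_evaluation_eq_id (Y X : C) [ExactPairing Y X] :
    (ρ_ X).inv ≫ (X ◁ η_ Y X) ≫ (α_ X Y X).inv ≫ (ε_ Y X ▷ X) ≫ (λ_ X).hom = 𝟙 X := by
  simp

def leftTransfer (Y X : C) [ExactPairing Y X] {M N : C} (ψ : X ⊗ M ⟶ N ⊗ X) :
    M ⊗ Y ⟶ Y ⊗ N :=
  𝟙 _ ⊗≫ η_ Y X ▷ (M ⊗ Y) ⊗≫ Y ◁ (ψ ▷ Y) ⊗≫ Y ◁ (N ◁ ε_ Y X) ⊗≫ 𝟙 _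

theorem leftTransfer_tensor {X Y X' Y' L M N : C} [ExactPairing Y X] [ExactPairing Y' X']
    (ψ : X ⊗ M ⟶ N ⊗ X) (ψ' : X' ⊗ L ⟶ M ⊗ X') :
    leftTransfer (Y' ⊗ Y) (X ⊗ X')
        ((α_ X X' L).hom ≫ X ◁ ψ' ≫ (α_ X M X').inv ≫ ψ ▷ X' ≫ (α_ N X X').hom) =
      (α_ L Y' Y).inv ≫ leftTransfer Y' X' ψ' ▷ Y ≫ (α_ Y' M Y).hom ≫
        Y' ◁ leftTransfer Y X ψ ≫ (α_ Y' Y N).inv := by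
  simp only [leftTransfer, ExactPairing.tensor_coevaluation, ExactPairing.tensor_evaluation]
  set e : X' ⊗ Y' ⊗ Y ⟶ Y := (α_ X' Y' Y).inv ≫ ε_ Y' X' ▷ Y ≫ (λ_ Y).hom
  trans 𝟙 _ ⊗≫ η_ Y' X' ▷ (L ⊗ Y' ⊗ Y) ⊗≫
      Y' ◁ (η_ Y X ▷ ((X' ⊗ L) ⊗ Y' ⊗ Y) ≫ (Y ⊗ X) ◁ (ψ' ▷ (Y' ⊗ Y))) ⊗≫
      (Y' ⊗ Y) ◁ (ψ ▷ (X' ⊗ Y' ⊗ Y) ≫ (N ⊗ X) ◁ e) ⊗≫ ((Y' ⊗ Y) ⊗ N) ◁ ε_ Y X ⊗≫ 𝟙 _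
  · monoidal
  rw [← whisker_exchange, ← whisker_exchange]
  trans 𝟙 _ ⊗≫ η_ Y' X' ▷ (L ⊗ Y' ⊗ Y) ⊗≫ Y' ◁ (ψ' ▷ (Y' ⊗ Y)) ⊗≫
      Y' ◁ (η_ Y X ▷ (M ⊗ X' ⊗ Y' ⊗ Y) ≫ (Y ⊗ X) ◁ (M ◁ e)) ⊗≫
      (Y' ⊗ Y) ◁ (ψ ▷ Y) ⊗≫ ((Y' ⊗ Y) ⊗ N) ◁ ε_ Y X ⊗≫ 𝟙 _
  · monoidal
  rw [← whisker_exchange]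
  monoidal

end CategoryTheory

theorem stmt10_general {C : Type*} [Category C] [MonoidalCategory C]
    (A : Mon C) (X Y X' Y' : C)
    (ψ : X ⊗ A.X ⟶ A.X ⊗ X) (ψ' : X' ⊗ A.X ⟶ A.X ⊗ X')
    (b : 𝟙_ C ⟶ Y ⊗ X) (d : X ⊗ Y ⟶ 𝟙_ C)
    (b' : 𝟙_ C ⟶ Y' ⊗ X') (d' : X' ⊗ Y' ⟶ 𝟙_ C)
    (tri1 : (λ_ Y).inv ≫ (b ▷ Y) ≫ (α_ Y X Y).hom ≫ (Y ◁ d) ≫ (ρ_ Y).hom = 𝟙 Y)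
    (tri2 : (ρ_ X).inv ≫ (X ◁ b) ≫ (α_ X Y X).inv ≫ (d ▷ X) ≫ (λ_ X).hom = 𝟙 X)
    (tri1' : (λ_ Y').inv ≫ (b' ▷ Y') ≫ (α_ Y' X' Y').hom ≫ (Y' ◁ d') ≫ (ρ_ Y').hom = 𝟙 Y')
    (tri2' : (ρ_ X').inv ≫ (X' ◁ b') ≫ (α_ X' Y' X').inv ≫ (d' ▷ X') ≫ (λ_ X').hom = 𝟙 X') :
    ∀ (B : 𝟙_ C ⟶ (Y' ⊗ Y) ⊗ (X ⊗ X')) (D : (X ⊗ X') ⊗ (Y' ⊗ Y) ⟶ 𝟙_ C)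
      (ψψ' : (X ⊗ X') ⊗ A.X ⟶ A.X ⊗ (X ⊗ X'))
      (φ : A.X ⊗ Y ⟶ Y ⊗ A.X) (φ' : A.X ⊗ Y' ⟶ Y' ⊗ A.X),
      -- unit and counit of the composite adjunction `X ⊗ X' ⊣ Y' ⊗ Y`
      B = b' ≫ (Y' ◁ (λ_ X').inv) ≫ (Y' ◁ (b ▷ X')) ≫ (Y' ◁ (α_ Y X X').hom) ≫
            (α_ Y' Y (X ⊗ X')).inv →
      D = (α_ X X' (Y' ⊗ Y)).hom ≫ (X ◁ (α_ X' Y' Y).inv) ≫ (X ◁ (d' ▷ Y)) ≫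
            (X ◁ (λ_ Y).hom) ≫ d →
      -- the tensor product transfer morphism `ψ·ψ'`
      ψψ' = (α_ X X' A.X).hom ≫ (X ◁ ψ') ≫ (α_ X A.X X').inv ≫ (ψ ▷ X') ≫
            (α_ A.X X X').hom →
      -- the induced left transfer morphisms on `Y` and `Y'`
      φ = (λ_ (A.X ⊗ Y)).inv ≫ (b ▷ (A.X ⊗ Y)) ≫ (α_ Y X (A.X ⊗ Y)).hom ≫
            (Y ◁ (α_ X A.X Y).inv) ≫ (Y ◁ (ψ ▷ Y)) ≫ (Y ◁ (α_ A.X X Y).hom) ≫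
            (Y ◁ (A.X ◁ d)) ≫ (Y ◁ (ρ_ A.X).hom) →
      φ' = (λ_ (A.X ⊗ Y')).inv ≫ (b' ▷ (A.X ⊗ Y')) ≫ (α_ Y' X' (A.X ⊗ Y')).hom ≫
            (Y' ◁ (α_ X' A.X Y').inv) ≫ (Y' ◁ (ψ' ▷ Y')) ≫ (Y' ◁ (α_ A.X X' Y').hom) ≫
            (Y' ◁ (A.X ◁ d')) ≫ (Y' ◁ (ρ_ A.X).hom) →
      -- `Y' ⊗ Y` is a right adjoint of `X ⊗ X'`: triangle identities
      ((λ_ (Y' ⊗ Y)).inv ≫ (B ▷ (Y' ⊗ Y)) ≫ (α_ (Y' ⊗ Y) (X ⊗ X') (Y' ⊗ Y)).hom ≫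
          ((Y' ⊗ Y) ◁ D) ≫ (ρ_ (Y' ⊗ Y)).hom = 𝟙 (Y' ⊗ Y)) ∧
      ((ρ_ (X ⊗ X')).inv ≫ ((X ⊗ X') ◁ B) ≫ (α_ (X ⊗ X') (Y' ⊗ Y) (X ⊗ X')).inv ≫
          (D ▷ (X ⊗ X')) ≫ (λ_ (X ⊗ X')).hom = 𝟙 (X ⊗ X')) ∧
      -- the induced left transfer morphism on `Y' ⊗ Y` from `ψ·ψ'` equals `φ'·φ`
      ((λ_ (A.X ⊗ (Y' ⊗ Y))).inv ≫ (B ▷ (A.X ⊗ (Y' ⊗ Y))) ≫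
          (α_ (Y' ⊗ Y) (X ⊗ X') (A.X ⊗ (Y' ⊗ Y))).hom ≫
          ((Y' ⊗ Y) ◁ (α_ (X ⊗ X') A.X (Y' ⊗ Y)).inv) ≫
          ((Y' ⊗ Y) ◁ (ψψ' ▷ (Y' ⊗ Y))) ≫
          ((Y' ⊗ Y) ◁ (α_ A.X (X ⊗ X') (Y' ⊗ Y)).hom) ≫
          ((Y' ⊗ Y) ◁ (A.X ◁ D)) ≫ ((Y' ⊗ Y) ◁ (ρ_ A.X).hom) =
        (α_ A.X Y' Y).inv ≫ (φ' ▷ Y) ≫ (α_ Y' A.X Y).hom ≫ (Y' ◁ φ) ≫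
          (α_ Y' Y A.X).inv) := by
  intro B D ψψ' φ φ' hB hD hψψ' hφ hφ'
  let : ExactPairing Y X := .ofTriangles b d tri1 tri2
  let : ExactPairing Y' X' := .ofTriangles b' d' tri1' tri2'
  have hη : η_ Y X = b := rfl
  have hη' : η_ Y' X' = b' := rfl
  have hε : ε_ Y X = d := rfl
  have hε' : ε_ Y' X' = d' := rfl
  have hB : B = η_ (Y' ⊗ Y) (X ⊗ X') := by
    rw [hB, ExactPairing.tensor_coevaluation, hη, hη']; monoidal
  have hD : D = ε_ (Y' ⊗ Y) (X ⊗ X') := by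
    rw [hD, ExactPairing.tensor_evaluation, hε, hε']; monoidal
  have hφ : φ = leftTransfer Y X ψ := by
    rw [hφ, leftTransfer, hη, hε]; monoidal
  have hφ' : φ' = leftTransfer Y' X' ψ' := by
    rw [hφ', leftTransfer, hη', hε']; monoidal
  subst hB hD hψψ' hφ hφ'
  refine ⟨ExactPairing.evaluation_coevaluation_eq_id _ _,
    ExactPairing.coevaluation_evaluation_eq_id _ _, ?_⟩
  rw [← leftTransfer_tensor, leftTransfer]
  monoidal

/-- for right transfer morphisms `(X, ψ)`, `(X', ψ')` through `A` with `X ⊣ Y`,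
`X' ⊣ Y'`, the object `Y' ⊗ Y` is a right adjoint of `X ⊗ X'` (via the composite adjunction),
and the left transfer morphism induced on `Y' ⊗ Y` by `ψ·ψ' = (ψ⊗X') ∘ (X⊗ψ')` coincides with
the composite `φ'·φ = (Y'⊗φ) ∘ (φ'⊗Y)` of the two induced left transfer morphisms. -/
theorem stmt10 {C : Type*} [Category C] [MonoidalCategory C]
    (A : Mon C) (X Y X' Y' : C)
    (ψ : X ⊗ A.X ⟶ A.X ⊗ X) (ψ' : X' ⊗ A.X ⟶ A.X ⊗ X')
    (hψm : (X ◁ MonObj.mul (X := A.X)) ≫ ψ =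
      (α_ X A.X A.X).inv ≫ (ψ ▷ A.X) ≫ (α_ A.X X A.X).hom ≫ (A.X ◁ ψ) ≫
        (α_ A.X A.X X).inv ≫ (MonObj.mul (X := A.X) ▷ X))
    (hψu : (X ◁ MonObj.one (X := A.X)) ≫ ψ = (ρ_ X).hom ≫ (λ_ X).inv ≫ (MonObj.one (X := A.X) ▷ X))
    (hψ'm : (X' ◁ MonObj.mul (X := A.X)) ≫ ψ' =
      (α_ X' A.X A.X).inv ≫ (ψ' ▷ A.X) ≫ (α_ A.X X' A.X).hom ≫ (A.X ◁ ψ') ≫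
        (α_ A.X A.X X').inv ≫ (MonObj.mul (X := A.X) ▷ X'))
    (hψ'u : (X' ◁ MonObj.one (X := A.X)) ≫ ψ' = (ρ_ X').hom ≫ (λ_ X').inv ≫ (MonObj.one (X := A.X) ▷ X'))
    (b : 𝟙_ C ⟶ Y ⊗ X) (d : X ⊗ Y ⟶ 𝟙_ C)
    (b' : 𝟙_ C ⟶ Y' ⊗ X') (d' : X' ⊗ Y' ⟶ 𝟙_ C)
    (tri1 : (λ_ Y).inv ≫ (b ▷ Y) ≫ (α_ Y X Y).hom ≫ (Y ◁ d) ≫ (ρ_ Y).hom = 𝟙 Y)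
    (tri2 : (ρ_ X).inv ≫ (X ◁ b) ≫ (α_ X Y X).inv ≫ (d ▷ X) ≫ (λ_ X).hom = 𝟙 X)
    (tri1' : (λ_ Y').inv ≫ (b' ▷ Y') ≫ (α_ Y' X' Y').hom ≫ (Y' ◁ d') ≫ (ρ_ Y').hom = 𝟙 Y')
    (tri2' : (ρ_ X').inv ≫ (X' ◁ b') ≫ (α_ X' Y' X').inv ≫ (d' ▷ X') ≫ (λ_ X').hom = 𝟙 X') :
    ∀ (B : 𝟙_ C ⟶ (Y' ⊗ Y) ⊗ (X ⊗ X')) (D : (X ⊗ X') ⊗ (Y' ⊗ Y) ⟶ 𝟙_ C)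
      (ψψ' : (X ⊗ X') ⊗ A.X ⟶ A.X ⊗ (X ⊗ X'))
      (φ : A.X ⊗ Y ⟶ Y ⊗ A.X) (φ' : A.X ⊗ Y' ⟶ Y' ⊗ A.X),
      -- unit and counit of the composite adjunction `X ⊗ X' ⊣ Y' ⊗ Y`
      B = b' ≫ (Y' ◁ (λ_ X').inv) ≫ (Y' ◁ (b ▷ X')) ≫ (Y' ◁ (α_ Y X X').hom) ≫
            (α_ Y' Y (X ⊗ X')).inv →
      D = (α_ X X' (Y' ⊗ Y)).hom ≫ (X ◁ (α_ X' Y' Y).inv) ≫ (X ◁ (d' ▷ Y)) ≫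
            (X ◁ (λ_ Y).hom) ≫ d →
      -- the tensor product transfer morphism `ψ·ψ'`
      ψψ' = (α_ X X' A.X).hom ≫ (X ◁ ψ') ≫ (α_ X A.X X').inv ≫ (ψ ▷ X') ≫
            (α_ A.X X X').hom →
      -- the induced left transfer morphisms on `Y` and `Y'`
      φ = (λ_ (A.X ⊗ Y)).inv ≫ (b ▷ (A.X ⊗ Y)) ≫ (α_ Y X (A.X ⊗ Y)).hom ≫
            (Y ◁ (α_ X A.X Y).inv) ≫ (Y ◁ (ψ ▷ Y)) ≫ (Y ◁ (α_ A.X X Y).hom) ≫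
            (Y ◁ (A.X ◁ d)) ≫ (Y ◁ (ρ_ A.X).hom) →
      φ' = (λ_ (A.X ⊗ Y')).inv ≫ (b' ▷ (A.X ⊗ Y')) ≫ (α_ Y' X' (A.X ⊗ Y')).hom ≫
            (Y' ◁ (α_ X' A.X Y').inv) ≫ (Y' ◁ (ψ' ▷ Y')) ≫ (Y' ◁ (α_ A.X X' Y').hom) ≫
            (Y' ◁ (A.X ◁ d')) ≫ (Y' ◁ (ρ_ A.X).hom) →
      -- `Y' ⊗ Y` is a right adjoint of `X ⊗ X'`: triangle identities
      ((λ_ (Y' ⊗ Y)).inv ≫ (B ▷ (Y' ⊗ Y)) ≫ (α_ (Y' ⊗ Y) (X ⊗ X') (Y' ⊗ Y)).hom ≫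
          ((Y' ⊗ Y) ◁ D) ≫ (ρ_ (Y' ⊗ Y)).hom = 𝟙 (Y' ⊗ Y)) ∧
      ((ρ_ (X ⊗ X')).inv ≫ ((X ⊗ X') ◁ B) ≫ (α_ (X ⊗ X') (Y' ⊗ Y) (X ⊗ X')).inv ≫
          (D ▷ (X ⊗ X')) ≫ (λ_ (X ⊗ X')).hom = 𝟙 (X ⊗ X')) ∧
      -- the induced left transfer morphism on `Y' ⊗ Y` from `ψ·ψ'` equals `φ'·φ`
      ((λ_ (A.X ⊗ (Y' ⊗ Y))).inv ≫ (B ▷ (A.X ⊗ (Y' ⊗ Y))) ≫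
          (α_ (Y' ⊗ Y) (X ⊗ X') (A.X ⊗ (Y' ⊗ Y))).hom ≫
          ((Y' ⊗ Y) ◁ (α_ (X ⊗ X') A.X (Y' ⊗ Y)).inv) ≫
          ((Y' ⊗ Y) ◁ (ψψ' ▷ (Y' ⊗ Y))) ≫
          ((Y' ⊗ Y) ◁ (α_ A.X (X ⊗ X') (Y' ⊗ Y)).hom) ≫
          ((Y' ⊗ Y) ◁ (A.X ◁ D)) ≫ ((Y' ⊗ Y) ◁ (ρ_ A.X).hom) =
        (α_ A.X Y' Y).inv ≫ (φ' ▷ Y) ≫ (α_ Y' A.X Y).hom ≫ (Y' ◁ φ) ≫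
          (α_ Y' Y A.X).inv) :=
  stmt10_general A X Y X' Y' ψ ψ' b d b' d' tri1 tri2 tri1' tri2'
end

section
/- Let C be a monoidal category. A coalgebra C (with comultiplication Δ and counit ε) is coseparable if and only if there exists a morphism B : C⊗C → 1 such that B∘Δ = ε and (C⊗B)∘(Δ⊗C) = (B⊗C)∘(C⊗Δ). Equivalently, this holds if and only if Δ has a C-bicolinear left inverse γ : C⊗C → C (γ∘Δ = id, with (C⊗γ)∘(Δ⊗C) = Δ∘γ = (γ⊗C)∘(C⊗Δ)). -/
/-!
A bicolinear retraction `γ` of `Δ` lets one average any `q : N ⟶ C₀` out of a bicomodule,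
first with the right coaction and then with the left one, into a bicolinear morphism; bicolinear
morphisms are fixed by averaging, so averaging `p ≫ f` extends `f` along `i`. Conversely,
coseparability applied to the split bicolinear mono `Δ : C₀ ⟶ C₀ ⊗ C₀` and to `f = 𝟙 C₀` yields
`γ`. Forms and retractions correspond via `B = γ ≫ ε` and `γ = (Δ ▷ C₀) ≫ α ≫ (C₀ ◁ B) ≫ ρ`.
-/

open CategoryTheory MonoidalCategory

variable {C : Type*} [CategoryTheory.Category C] [CategoryTheory.MonoidalCategory C]

/-- `(M, l, r)` is a `C₀`-bicomodule over the coalgebra `(C₀, Δ, ε)`. -/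
def IsBicomod (C₀ : C) (Δ : C₀ ⟶ C₀ ⊗ C₀) (ε : C₀ ⟶ 𝟙_ C)
    (M : C) (l : M ⟶ C₀ ⊗ M) (r : M ⟶ M ⊗ C₀) : Prop :=
  (l ≫ (C₀ ◁ l) = l ≫ (Δ ▷ M) ≫ (α_ C₀ C₀ M).hom) ∧
  (l ≫ (ε ▷ M) ≫ (λ_ M).hom = 𝟙 M) ∧
  (r ≫ (r ▷ C₀) = r ≫ (M ◁ Δ) ≫ (α_ M C₀ C₀).inv) ∧
  (r ≫ (M ◁ ε) ≫ (ρ_ M).hom = 𝟙 M) ∧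
  (l ≫ (C₀ ◁ r) = r ≫ (l ▷ C₀) ≫ (α_ C₀ M C₀).hom)

/-- `f` is a bicolinear morphism of `C₀`-bicomodules. -/
def IsBicolinear (C₀ : C) {M N : C} (l : M ⟶ C₀ ⊗ M) (r : M ⟶ M ⊗ C₀)
    (l' : N ⟶ C₀ ⊗ N) (r' : N ⟶ N ⊗ C₀) (f : M ⟶ N) : Prop :=
  (l ≫ (C₀ ◁ f) = f ≫ l') ∧ (r ≫ (f ▷ C₀) = f ≫ r')

/-- A coalgebra `(C₀, Δ, ε)` is coseparable: it is relative injective as a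
`C₀`-bicomodule; every bicolinear `f : M ⟶ C₀` factors bicolinearly through any bicolinear
`i : M ⟶ N` admitting a left inverse in `C`. -/
def Coseparable (C₀ : C) (Δ : C₀ ⟶ C₀ ⊗ C₀) (ε : C₀ ⟶ 𝟙_ C) : Prop :=
  ∀ (M : C) (lM : M ⟶ C₀ ⊗ M) (rM : M ⟶ M ⊗ C₀),
    IsBicomod C₀ Δ ε M lM rM →
  ∀ (N : C) (lN : N ⟶ C₀ ⊗ N) (rN : N ⟶ N ⊗ C₀),
    IsBicomod C₀ Δ ε N lN rN →
  ∀ i : M ⟶ N, IsBicolinear C₀ lM rM lN rN i →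
  ∀ p : N ⟶ M, i ≫ p = 𝟙 M →
  ∀ f : M ⟶ C₀,
    IsBicolinear C₀ lM rM (Δ : C₀ ⟶ C₀ ⊗ C₀) (Δ : C₀ ⟶ C₀ ⊗ C₀) f →
    ∃ g : N ⟶ C₀,
      IsBicolinear C₀ lN rN (Δ : C₀ ⟶ C₀ ⊗ C₀) (Δ : C₀ ⟶ C₀ ⊗ C₀) g ∧ i ≫ g = f

section Coalgebra

variable {C₀ : C} {Δ : C₀ ⟶ C₀ ⊗ C₀} {ε : C₀ ⟶ 𝟙_ C}

def rightAverage (γ : C₀ ⊗ C₀ ⟶ C₀) {N : C} (r : N ⟶ N ⊗ C₀) (q : N ⟶ C₀) : N ⟶ C₀ :=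
  r ≫ (q ▷ C₀) ≫ γ

def leftAverage (γ : C₀ ⊗ C₀ ⟶ C₀) {N : C} (l : N ⟶ C₀ ⊗ N) (q : N ⟶ C₀) : N ⟶ C₀ :=
  l ≫ (C₀ ◁ q) ≫ γ

section Averages

variable {γ : C₀ ⊗ C₀ ⟶ C₀} {M N : C}

lemma comp_rightAverage {rM : M ⟶ M ⊗ C₀} {rN : N ⟶ N ⊗ C₀} {i : M ⟶ N}
    (hi : rM ≫ (i ▷ C₀) = i ≫ rN) (q : N ⟶ C₀) :
    i ≫ rightAverage γ rN q = rightAverage γ rM (i ≫ q) := by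
  simp only [rightAverage, comp_whiskerRight, Category.assoc]
  rw [← reassoc_of% hi]

lemma comp_leftAverage {lM : M ⟶ C₀ ⊗ M} {lN : N ⟶ C₀ ⊗ N} {i : M ⟶ N}
    (hi : lM ≫ (C₀ ◁ i) = i ≫ lN) (q : N ⟶ C₀) :
    i ≫ leftAverage γ lN q = leftAverage γ lM (i ≫ q) := by
  simp only [leftAverage, MonoidalCategory.whiskerLeft_comp, Category.assoc]
  rw [← reassoc_of% hi]

lemma rightAverage_eq_self (hγ : Δ ≫ γ = 𝟙 C₀) {r : M ⟶ M ⊗ C₀} {f : M ⟶ C₀}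
    (hf : r ≫ (f ▷ C₀) = f ≫ Δ) : rightAverage γ r f = f := by
  rw [rightAverage, reassoc_of% hf, hγ, Category.comp_id]

lemma leftAverage_eq_self (hγ : Δ ≫ γ = 𝟙 C₀) {l : M ⟶ C₀ ⊗ M} {f : M ⟶ C₀}
    (hf : l ≫ (C₀ ◁ f) = f ≫ Δ) : leftAverage γ l f = f := by
  rw [leftAverage, reassoc_of% hf, hγ, Category.comp_id]

lemma rightAverage_rightColinear
    (hγ : (C₀ ◁ Δ) ≫ (α_ C₀ C₀ C₀).inv ≫ (γ ▷ C₀) = γ ≫ Δ) {r : N ⟶ N ⊗ C₀}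
    (hr : r ≫ (r ▷ C₀) = r ≫ (N ◁ Δ) ≫ (α_ N C₀ C₀).inv) (q : N ⟶ C₀) :
    r ≫ (rightAverage γ r q ▷ C₀) = rightAverage γ r q ≫ Δ := by
  simp only [rightAverage, comp_whiskerRight, Category.assoc]
  slice_lhs 1 2 => rw [hr]
  slice_lhs 3 4 => rw [← associator_inv_naturality_left]
  slice_lhs 2 3 => rw [whisker_exchange]
  slice_lhs 3 5 => rw [hγ]

lemma leftAverage_leftColinear
    (hγ : (Δ ▷ C₀) ≫ (α_ C₀ C₀ C₀).hom ≫ (C₀ ◁ γ) = γ ≫ Δ) {l : N ⟶ C₀ ⊗ N}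
    (hl : l ≫ (C₀ ◁ l) = l ≫ (Δ ▷ N) ≫ (α_ C₀ C₀ N).hom) (q : N ⟶ C₀) :
    l ≫ (C₀ ◁ leftAverage γ l q) = leftAverage γ l q ≫ Δ := by
  simp only [leftAverage, MonoidalCategory.whiskerLeft_comp, Category.assoc]
  slice_lhs 1 2 => rw [hl]
  slice_lhs 3 4 => rw [← associator_naturality_right]
  slice_lhs 2 3 => rw [← whisker_exchange]
  slice_lhs 3 5 => rw [hγ]

lemma leftAverage_rightColinear
    (hγ : (C₀ ◁ Δ) ≫ (α_ C₀ C₀ C₀).inv ≫ (γ ▷ C₀) = γ ≫ Δ)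
    {l : N ⟶ C₀ ⊗ N} {r : N ⟶ N ⊗ C₀}
    (hlr : l ≫ (C₀ ◁ r) = r ≫ (l ▷ C₀) ≫ (α_ C₀ N C₀).hom) {q : N ⟶ C₀}
    (hq : r ≫ (q ▷ C₀) = q ≫ Δ) :
    r ≫ (leftAverage γ l q ▷ C₀) = leftAverage γ l q ≫ Δ := by
  have hrl : r ≫ (l ▷ C₀) = l ≫ (C₀ ◁ r) ≫ (α_ C₀ N C₀).inv := by
    rw [reassoc_of% hlr, Iso.hom_inv_id, Category.comp_id]
  simp only [leftAverage, comp_whiskerRight, Category.assoc]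
  slice_lhs 1 2 => rw [hrl]
  slice_lhs 3 4 => rw [← associator_inv_naturality_middle]
  slice_lhs 2 3 => rw [← MonoidalCategory.whiskerLeft_comp, hq,
    MonoidalCategory.whiskerLeft_comp]
  slice_lhs 3 5 => rw [hγ]

end Averages

def IsBicolinearRetraction (Δ : C₀ ⟶ C₀ ⊗ C₀) (γ : C₀ ⊗ C₀ ⟶ C₀) : Prop :=
  Δ ≫ γ = 𝟙 C₀ ∧
  (Δ ▷ C₀) ≫ (α_ C₀ C₀ C₀).hom ≫ (C₀ ◁ γ) = γ ≫ Δ ∧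
  (C₀ ◁ Δ) ≫ (α_ C₀ C₀ C₀).inv ≫ (γ ▷ C₀) = γ ≫ Δ

def IsCoseparabilityForm (Δ : C₀ ⟶ C₀ ⊗ C₀) (ε : C₀ ⟶ 𝟙_ C) (B : C₀ ⊗ C₀ ⟶ 𝟙_ C) : Prop :=
  Δ ≫ B = ε ∧
  (Δ ▷ C₀) ≫ (α_ C₀ C₀ C₀).hom ≫ (C₀ ◁ B) ≫ (ρ_ C₀).hom =
    (C₀ ◁ Δ) ≫ (α_ C₀ C₀ C₀).inv ≫ (B ▷ C₀) ≫ (λ_ C₀).hom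

lemma coseparable_of_isBicolinearRetraction {γ : C₀ ⊗ C₀ ⟶ C₀}
    (hγ : IsBicolinearRetraction Δ γ) : Coseparable C₀ Δ ε := by
  obtain ⟨hΔγ, hγl, hγr⟩ := hγ
  intro M lM rM _ N lN rN hN i ⟨hil, hir⟩ p hp f ⟨hfl, hfr⟩
  have hq := rightAverage_rightColinear hγr hN.2.2.1 (p ≫ f)
  refine ⟨leftAverage γ lN (rightAverage γ rN (p ≫ f)),
    ⟨leftAverage_leftColinear hγl hN.1 _, leftAverage_rightColinear hγr hN.2.2.2.2 hq⟩, ?_⟩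
  rw [comp_leftAverage hil, comp_rightAverage hir, reassoc_of% hp,
    rightAverage_eq_self hΔγ hfr, leftAverage_eq_self hΔγ hfl]

lemma coassoc_inv (coassoc : Δ ≫ (Δ ▷ C₀) ≫ (α_ C₀ C₀ C₀).hom = Δ ≫ (C₀ ◁ Δ)) :
    Δ ≫ (Δ ▷ C₀) = Δ ≫ (C₀ ◁ Δ) ≫ (α_ C₀ C₀ C₀).inv := by
  rw [← reassoc_of% coassoc, Iso.hom_inv_id, Category.comp_id]

lemma isBicomod_self (coassoc : Δ ≫ (Δ ▷ C₀) ≫ (α_ C₀ C₀ C₀).hom = Δ ≫ (C₀ ◁ Δ))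
    (counit_left : Δ ≫ (ε ▷ C₀) ≫ (λ_ C₀).hom = 𝟙 C₀)
    (counit_right : Δ ≫ (C₀ ◁ ε) ≫ (ρ_ C₀).hom = 𝟙 C₀) : IsBicomod C₀ Δ ε C₀ Δ Δ :=
  ⟨coassoc.symm, counit_left, coassoc_inv coassoc, counit_right, coassoc.symm⟩

lemma isBicomod_tensor (coassoc : Δ ≫ (Δ ▷ C₀) ≫ (α_ C₀ C₀ C₀).hom = Δ ≫ (C₀ ◁ Δ))
    (counit_left : Δ ≫ (ε ▷ C₀) ≫ (λ_ C₀).hom = 𝟙 C₀)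
    (counit_right : Δ ≫ (C₀ ◁ ε) ≫ (ρ_ C₀).hom = 𝟙 C₀) :
    IsBicomod C₀ Δ ε (C₀ ⊗ C₀) ((Δ ▷ C₀) ≫ (α_ C₀ C₀ C₀).hom)
      ((C₀ ◁ Δ) ≫ (α_ C₀ C₀ C₀).inv) := by
  refine ⟨?_, ?_, ?_, ?_, ?_⟩
  · simp only [MonoidalCategory.whiskerLeft_comp, Category.assoc]
    slice_lhs 2 3 => rw [← associator_naturality_middle]
    slice_lhs 1 2 => rw [← comp_whiskerRight, ← coassoc]
    simp only [comp_whiskerRight, Category.assoc]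
    slice_rhs 2 3 => rw [← associator_naturality_left]
    monoidal
  · simp only [Category.assoc]
    slice_lhs 2 3 => rw [← associator_naturality_left]
    rw [leftUnitor_tensor_hom]
    simp only [Category.assoc, Iso.hom_inv_id_assoc]
    simp only [← comp_whiskerRight]
    rw [counit_left]
    simp
  · simp only [comp_whiskerRight, Category.assoc]
    slice_lhs 2 3 => rw [← associator_inv_naturality_middle]
    slice_lhs 1 2 => rw [← MonoidalCategory.whiskerLeft_comp, coassoc_inv coassoc]
    simp only [MonoidalCategory.whiskerLeft_comp, Category.assoc]
    slice_rhs 2 3 => rw [← associator_inv_naturality_right]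
    monoidal
  · simp only [Category.assoc]
    slice_lhs 2 3 => rw [← associator_inv_naturality_right]
    rw [rightUnitor_tensor_hom]
    simp only [Category.assoc, Iso.inv_hom_id_assoc]
    simp only [← MonoidalCategory.whiskerLeft_comp]
    rw [counit_right]
    simp
  · simp only [MonoidalCategory.whiskerLeft_comp, comp_whiskerRight, Category.assoc]
    slice_lhs 2 3 => rw [← associator_naturality_right]
    slice_lhs 1 2 => rw [← whisker_exchange]
    slice_rhs 2 3 => rw [← associator_inv_naturality_left]
    monoidal

lemma exists_isBicolinearRetraction
    (coassoc : Δ ≫ (Δ ▷ C₀) ≫ (α_ C₀ C₀ C₀).hom = Δ ≫ (C₀ ◁ Δ))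
    (counit_left : Δ ≫ (ε ▷ C₀) ≫ (λ_ C₀).hom = 𝟙 C₀)
    (counit_right : Δ ≫ (C₀ ◁ ε) ≫ (ρ_ C₀).hom = 𝟙 C₀) (hc : Coseparable C₀ Δ ε) :
    ∃ γ, IsBicolinearRetraction Δ γ := by
  obtain ⟨γ, ⟨hγl, hγr⟩, hΔγ⟩ :=
    hc C₀ Δ Δ (isBicomod_self coassoc counit_left counit_right) (C₀ ⊗ C₀) _ _
      (isBicomod_tensor coassoc counit_left counit_right) Δ
      ⟨coassoc.symm, coassoc_inv coassoc⟩ _ counit_right (𝟙 C₀) ⟨by simp, by simp⟩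
  exact ⟨γ, hΔγ, by simpa using hγl, by simpa using hγr⟩

lemma IsBicolinearRetraction.isCoseparabilityForm
    (counit_left : Δ ≫ (ε ▷ C₀) ≫ (λ_ C₀).hom = 𝟙 C₀)
    (counit_right : Δ ≫ (C₀ ◁ ε) ≫ (ρ_ C₀).hom = 𝟙 C₀) {γ : C₀ ⊗ C₀ ⟶ C₀}
    (hγ : IsBicolinearRetraction Δ γ) : IsCoseparabilityForm Δ ε (γ ≫ ε) := by
  obtain ⟨hΔγ, hγl, hγr⟩ := hγ
  refine ⟨by rw [reassoc_of% hΔγ], ?_⟩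
  simp only [MonoidalCategory.whiskerLeft_comp, comp_whiskerRight, Category.assoc]
  rw [reassoc_of% hγl, reassoc_of% hγr, counit_left, counit_right]

lemma IsCoseparabilityForm.isBicolinearRetraction
    (coassoc : Δ ≫ (Δ ▷ C₀) ≫ (α_ C₀ C₀ C₀).hom = Δ ≫ (C₀ ◁ Δ))
    (counit_right : Δ ≫ (C₀ ◁ ε) ≫ (ρ_ C₀).hom = 𝟙 C₀) {B : C₀ ⊗ C₀ ⟶ 𝟙_ C}
    (hB : IsCoseparabilityForm Δ ε B) :
    IsBicolinearRetraction Δ ((Δ ▷ C₀) ≫ (α_ C₀ C₀ C₀).hom ≫ (C₀ ◁ B) ≫ (ρ_ C₀).hom) := by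
  obtain ⟨hΔB, hB⟩ := hB
  refine ⟨?_, ?_, ?_⟩
  · slice_lhs 1 3 => rw [coassoc]
    slice_lhs 2 3 => rw [← MonoidalCategory.whiskerLeft_comp, hΔB]
    exact counit_right
  · simp only [MonoidalCategory.whiskerLeft_comp, Category.assoc]
    slice_lhs 2 3 => rw [← associator_naturality_middle]
    slice_lhs 1 2 => rw [← comp_whiskerRight, ← coassoc]
    simp only [comp_whiskerRight, Category.assoc]
    slice_lhs 3 5 => rw [pentagon]
    slice_lhs 4 5 => rw [← associator_naturality_right]
    slice_lhs 5 6 => rw [← rightUnitor_tensor_hom]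
    slice_lhs 2 3 => rw [associator_naturality_left]
    slice_rhs 4 5 => rw [← rightUnitor_naturality]
    slice_rhs 3 4 => rw [whisker_exchange]
    simp only [Category.assoc]
  · rw [hB]
    simp only [comp_whiskerRight, Category.assoc]
    slice_lhs 2 3 => rw [← associator_inv_naturality_middle]
    slice_lhs 1 2 => rw [← MonoidalCategory.whiskerLeft_comp, coassoc_inv coassoc]
    simp only [MonoidalCategory.whiskerLeft_comp, Category.assoc]
    slice_lhs 3 5 => rw [pentagon_inv]
    slice_lhs 4 5 => rw [← associator_inv_naturality_left]
    slice_lhs 5 6 => rw [← leftUnitor_tensor_hom]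
    slice_lhs 2 3 => rw [associator_inv_naturality_right]
    slice_rhs 4 5 => rw [← leftUnitor_naturality]
    slice_rhs 3 4 => rw [← whisker_exchange]
    simp only [Category.assoc]

end Coalgebra

/-- a coalgebra `(C₀, Δ, ε)` in a monoidal category is coseparable iff there
is a morphism `B : C₀ ⊗ C₀ ⟶ 𝟙` with `B ∘ Δ = ε` and
`(C₀ ⊗ B) ∘ (Δ ⊗ C₀) = (B ⊗ C₀) ∘ (C₀ ⊗ Δ)`, iff `Δ` has a `C₀`-bicolinear left inverse
`γ : C₀ ⊗ C₀ ⟶ C₀`. -/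
theorem stmt17 (C₀ : C) (Δ : C₀ ⟶ C₀ ⊗ C₀) (ε : C₀ ⟶ 𝟙_ C)
    (coassoc : Δ ≫ (Δ ▷ C₀) ≫ (α_ C₀ C₀ C₀).hom = Δ ≫ (C₀ ◁ Δ))
    (counit_left : Δ ≫ (ε ▷ C₀) ≫ (λ_ C₀).hom = 𝟙 C₀)
    (counit_right : Δ ≫ (C₀ ◁ ε) ≫ (ρ_ C₀).hom = 𝟙 C₀) :
    (Coseparable C₀ Δ ε ↔
      ∃ B : C₀ ⊗ C₀ ⟶ 𝟙_ C,
        (Δ ≫ B = ε) ∧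
        ((Δ ▷ C₀) ≫ (α_ C₀ C₀ C₀).hom ≫ (C₀ ◁ B) ≫ (ρ_ C₀).hom =
          (C₀ ◁ Δ) ≫ (α_ C₀ C₀ C₀).inv ≫ (B ▷ C₀) ≫ (λ_ C₀).hom)) ∧
    (Coseparable C₀ Δ ε ↔
      ∃ γ : C₀ ⊗ C₀ ⟶ C₀,
        (Δ ≫ γ = 𝟙 C₀) ∧
        ((Δ ▷ C₀) ≫ (α_ C₀ C₀ C₀).hom ≫ (C₀ ◁ γ) = γ ≫ Δ) ∧
        ((C₀ ◁ Δ) ≫ (α_ C₀ C₀ C₀).inv ≫ (γ ▷ C₀) = γ ≫ Δ)) := by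
  have hγ : Coseparable C₀ Δ ε ↔ ∃ γ, IsBicolinearRetraction Δ γ :=
    ⟨exists_isBicolinearRetraction coassoc counit_left counit_right,
      fun ⟨_, hγ⟩ => coseparable_of_isBicolinearRetraction hγ⟩
  have hB : (∃ γ, IsBicolinearRetraction Δ γ) ↔ ∃ B, IsCoseparabilityForm Δ ε B :=
    ⟨fun ⟨γ, hγ⟩ => ⟨γ ≫ ε, hγ.isCoseparabilityForm counit_left counit_right⟩,
      fun ⟨_, hB⟩ => ⟨_, hB.isBicolinearRetraction coassoc counit_right⟩⟩
  exact ⟨hγ.trans hB, hγ⟩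
end

section
/- Let (A, X, ψ) be a cowreath in a monoidal category C whose unit object 1 is a left ⊗-generator. Then the forgetful functor F : C(ψ)_A^X → C_A is separable if and only if there exists a Casimir morphism B : X⊗X → A for the coalgebra (X, ψ) in T_A^# (i.e., B is a morphism X⊗X → 1 in T_A^# satisfying the Casimir condition (c) of Lemma 4.3) such that m ∘ (A⊗B) ∘ δ = ε. -/
open CategoryTheory MonoidalCategory

/-- A monoid object in a monoidal category (Mathlib's former `Mon_`, removed upstream). -/
structure Mon_ (C : Type*) [CategoryTheory.Category C] [CategoryTheory.MonoidalCategory C] where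
  X : C
  one : 𝟙_ C ⟶ X
  mul : X ⊗ X ⟶ X
  one_mul : (one ▷ X) ≫ mul = (λ_ X).hom
  mul_one : (X ◁ one) ≫ mul = (ρ_ X).hom
  mul_assoc : (mul ▷ X) ≫ mul = (α_ X X X).hom ≫ (X ◁ mul) ≫ mul

/-- A cowreath `(A, X, ψ)` in `C`: `(X, ψ)` is a coalgebra in the Eilenberg–Moore category
`T_A^#`, with comultiplication `δ : X ⟶ A ⊗ X ⊗ X` and counit `ε : X ⟶ A` satisfying
the axioms (a)–(e) of Section 2.2 of the paper. -/
structure Cowreath {C : Type*} [CategoryTheory.Category C]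
    [CategoryTheory.MonoidalCategory C] (A : Mon_ C) where
  X : C
  ψ : X ⊗ A.X ⟶ A.X ⊗ X
  ψ_mul : (X ◁ A.mul) ≫ ψ =
    (α_ X A.X A.X).inv ≫ (ψ ▷ A.X) ≫ (α_ A.X X A.X).hom ≫ (A.X ◁ ψ) ≫
      (α_ A.X A.X X).inv ≫ (A.mul ▷ X)
  ψ_one : (X ◁ A.one) ≫ ψ = (ρ_ X).hom ≫ (λ_ X).inv ≫ (A.one ▷ X)
  δ : X ⟶ A.X ⊗ (X ⊗ X)
  ε : X ⟶ A.X
  /-- (a): `δ` is a morphism `X → X ⊗ X` in `T_A^#`. -/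
  δ_compat : (δ ▷ A.X) ≫ (α_ A.X (X ⊗ X) A.X).hom ≫ (A.X ◁ (α_ X X A.X).hom) ≫
      (A.X ◁ (X ◁ ψ)) ≫ (A.X ◁ (α_ X A.X X).inv) ≫ (A.X ◁ (ψ ▷ X)) ≫
      (A.X ◁ (α_ A.X X X).hom) ≫ (α_ A.X A.X (X ⊗ X)).inv ≫ (A.mul ▷ (X ⊗ X)) =
    ψ ≫ (A.X ◁ δ) ≫ (α_ A.X A.X (X ⊗ X)).inv ≫ (A.mul ▷ (X ⊗ X))
  /-- (b): coassociativity of `δ`. -/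
  δ_coassoc : δ ≫ (A.X ◁ (δ ▷ X)) ≫ (A.X ◁ (α_ A.X (X ⊗ X) X).hom) ≫
      (α_ A.X A.X ((X ⊗ X) ⊗ X)).inv ≫ (A.mul ▷ ((X ⊗ X) ⊗ X)) ≫
      (A.X ◁ (α_ X X X).hom) =
    δ ≫ (A.X ◁ (X ◁ δ)) ≫ (A.X ◁ (α_ X A.X (X ⊗ X)).inv) ≫
      (A.X ◁ (ψ ▷ (X ⊗ X))) ≫ (A.X ◁ (α_ A.X X (X ⊗ X)).hom) ≫
      (α_ A.X A.X (X ⊗ (X ⊗ X))).inv ≫ (A.mul ▷ (X ⊗ (X ⊗ X)))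
  /-- (c): `ε` is a morphism `X → 𝟙` in `T_A^#`. -/
  ε_compat : ψ ≫ (A.X ◁ ε) ≫ A.mul = (ε ▷ A.X) ≫ A.mul
  /-- (d): left counit axiom. -/
  counit_left : δ ≫ (A.X ◁ (ε ▷ X)) ≫ (α_ A.X A.X X).inv ≫ (A.mul ▷ X) =
    (λ_ X).inv ≫ (A.one ▷ X)
  /-- (e): right counit axiom. -/
  counit_right : δ ≫ (A.X ◁ (X ◁ ε)) ≫ (A.X ◁ ψ) ≫ (α_ A.X A.X X).inv ≫
      (A.mul ▷ X) = (λ_ X).inv ≫ (A.one ▷ X)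
variable {C : Type*} [CategoryTheory.Category C] [CategoryTheory.MonoidalCategory C]

open CategoryTheory MonoidalCategory

/-- The category of right `A`-modules in `C`. -/
structure RMod (A : Mon_ C) where
  carrier : C
  act : carrier ⊗ A.X ⟶ carrier
  act_one : (carrier ◁ A.one) ≫ act = (ρ_ carrier).hom
  act_mul : (α_ carrier A.X A.X).inv ≫ (act ▷ A.X) ≫ act = (carrier ◁ A.mul) ≫ act

@[ext]
structure RModHom {A : Mon_ C} (M N : RMod A) where
  hom : M.carrier ⟶ N.carrier
  linear : M.act ≫ hom = (hom ▷ A.X) ≫ N.act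

instance {A : Mon_ C} : Category (RMod A) where
  Hom := RModHom
  id M := ⟨𝟙 M.carrier, by simp⟩
  comp f g := ⟨f.hom ≫ g.hom, by
    rw [← Category.assoc, f.linear, Category.assoc, g.linear, ← Category.assoc,
      ← MonoidalCategory.comp_whiskerRight]⟩
  id_comp f := by apply RModHom.ext; simp
  comp_id f := by apply RModHom.ext; simp
  assoc f g h := by apply RModHom.ext; simp

@[simp] lemma RMod_id_hom {A : Mon_ C} (M : RMod A) :
    RModHom.hom (𝟙 M) = 𝟙 M.carrier := rfl

@[simp] lemma RMod_comp_hom {A : Mon_ C} {M N K : RMod A} (f : M ⟶ N) (g : N ⟶ K) :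
    RModHom.hom (f ≫ g) = f.hom ≫ g.hom := rfl

/-- The regular right `A`-module. -/
def regMod (A : Mon_ C) : RMod A where
  carrier := A.X
  act := A.mul
  act_one := A.mul_one
  act_mul := by rw [A.mul_assoc]; simp

/-- The category of entwined modules in `C` over the cowreath `(A, X, ψ)`. -/
structure Ent (A : Mon_ C) (W : Cowreath A) where
  carrier : C
  act : carrier ⊗ A.X ⟶ carrier
  act_one : (carrier ◁ A.one) ≫ act = (ρ_ carrier).hom
  act_mul : (α_ carrier A.X A.X).inv ≫ (act ▷ A.X) ≫ act = (carrier ◁ A.mul) ≫ act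
  coact : carrier ⟶ carrier ⊗ W.X
  /-- the coaction is right `A`-linear -/
  coact_linear : act ≫ coact =
    (coact ▷ A.X) ≫ (α_ carrier W.X A.X).hom ≫ (carrier ◁ W.ψ) ≫
      (α_ carrier A.X W.X).inv ≫ (act ▷ W.X)
  /-- coassociativity of the coaction -/
  coact_coassoc : coact ≫ (coact ▷ W.X) ≫ (α_ carrier W.X W.X).hom =
    coact ≫ (carrier ◁ W.δ) ≫ (α_ carrier A.X (W.X ⊗ W.X)).inv ≫
      (act ▷ (W.X ⊗ W.X))
  /-- counit property of the coaction -/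
  coact_counit : coact ≫ (carrier ◁ W.ε) ≫ act = 𝟙 carrier

@[ext]
structure EntHom {A : Mon_ C} {W : Cowreath A} (M N : Ent A W) where
  hom : M.carrier ⟶ N.carrier
  linear : M.act ≫ hom = (hom ▷ A.X) ≫ N.act
  colinear : M.coact ≫ (hom ▷ W.X) = hom ≫ N.coact

instance {A : Mon_ C} {W : Cowreath A} : Category (Ent A W) where
  Hom := EntHom
  id M := ⟨𝟙 M.carrier, by simp, by simp⟩
  comp f g := ⟨f.hom ≫ g.hom, by
      rw [← Category.assoc, f.linear, Category.assoc, g.linear, ← Category.assoc,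
        ← MonoidalCategory.comp_whiskerRight], by
      rw [MonoidalCategory.comp_whiskerRight, ← Category.assoc, f.colinear,
        Category.assoc, g.colinear, ← Category.assoc]⟩
  id_comp f := by apply EntHom.ext; simp
  comp_id f := by apply EntHom.ext; simp
  assoc f g h := by apply EntHom.ext; simp

@[simp] lemma Ent_id_hom {A : Mon_ C} {W : Cowreath A} (M : Ent A W) :
    EntHom.hom (𝟙 M) = 𝟙 M.carrier := rfl

@[simp] lemma Ent_comp_hom {A : Mon_ C} {W : Cowreath A} {M N K : Ent A W}
    (f : M ⟶ N) (g : N ⟶ K) : EntHom.hom (f ≫ g) = f.hom ≫ g.hom := rfl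

/-- The forgetful functor from entwined modules to right `A`-modules. -/
def forgetF (A : Mon_ C) (W : Cowreath A) : Ent A W ⥤ RMod A where
  obj M := ⟨M.carrier, M.act, M.act_one, M.act_mul⟩
  map f := ⟨f.hom, f.linear⟩
  map_id M := rfl
  map_comp f g := rfl

/-- A separable functor (Năstăsescu–Van den Bergh–Van Oystaeyen): the maps
`Hom(M, N) → Hom(FM, FN)` split naturally. -/
def FunctorSeparable {A B : Type*} [Category A] [Category B] (F : A ⥤ B) : Prop :=
  ∃ P : ∀ (M N : A), (F.obj M ⟶ F.obj N) → (M ⟶ N),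
    (∀ (M N : A) (f : M ⟶ N), P M N (F.map f) = f) ∧
    (∀ (M M' N N' : A) (a : M' ⟶ M) (b : N ⟶ N') (f : F.obj M ⟶ F.obj N),
      P M' N' (F.map a ≫ f ≫ F.map b) = a ≫ P M N f ≫ b)

/-!
The forgetful functor `F` has a right adjoint `R ↦ R ⊗ X` (the cofree entwined module) whose
unit is the coaction `ρ`, so by Rafael's theorem `F` is separable iff `ρ` has a natural
retraction `ϑ`. Given `B`, the retraction at `N` is `n ⊗ x ↦ n₀ · B(n₁ ⊗ x)`: the first two
conditions on `B` make it `A`-linear and colinear, the normalization makes it a retraction.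
Conversely, as `𝟙` is a left `⊗`-generator, `ϑ` is determined on cofree modules by
`t : X ⊗ X ⟶ A ⊗ X`, its component at `A ⊗ X` restricted along the unit of `A`. Then
`B := m ∘ (A ⊗ ε) ∘ t` works: `ϑ ∘ ρ = id` gives the normalization, the linearity of `ϑ` at
`A ⊗ X` makes `B` a morphism of `T_A^#`, and the colinearity of `ϑ` at `A ⊗ X` and its
naturality along the coaction of `A ⊗ X` identify both sides of the Casimir condition with `t`.
-/

section Rafael

variable {𝒜 ℬ : Type*} [Category 𝒜] [Category ℬ] {F : 𝒜 ⥤ ℬ} {G : ℬ ⥤ 𝒜}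

/-- Rafael's theorem. -/
theorem functorSeparable_iff_exists_unit_retraction (adj : F ⊣ G) :
    FunctorSeparable F ↔ ∃ ϑ : F ⋙ G ⟶ 𝟭 𝒜, adj.unit ≫ ϑ = 𝟙 _ := by
  constructor
  · rintro ⟨P, hP_map, hP_nat⟩
    refine ⟨{ app M := P (G.obj (F.obj M)) M (adj.counit.app (F.obj M)), naturality := ?_ }, ?_⟩
    · intro M N g
      have hN := hP_nat _ _ N N (G.map (F.map g)) (𝟙 N) (adj.counit.app (F.obj N))
      have hM := hP_nat _ _ M N (𝟙 _) g (adj.counit.app (F.obj M))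
      simp at hN hM
      simp [← hN, hM]
    · ext M
      have h := hP_nat (G.obj (F.obj M)) M M M (adj.unit.app M) (𝟙 M) (adj.counit.app (F.obj M))
      rw [Adjunction.left_triangle_components_assoc, F.map_id, Category.comp_id] at h
      simpa [← h] using hP_map M M (𝟙 M)
  · rintro ⟨ϑ, hϑ⟩
    have hϑM (M : 𝒜) : adj.unit.app M ≫ ϑ.app M = 𝟙 M := by
      simpa using congrArg (fun τ => τ.app M) hϑ
    refine ⟨fun M N f => adj.unit.app M ≫ G.map f ≫ ϑ.app N, fun M N f => ?_,
      fun M M' N N' a b f => ?_⟩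
    · simp [hϑM]
    · have hb := ϑ.naturality b
      simp only [Functor.comp_map, Functor.id_map] at hb
      simp [hb]

end Rafael

lemma leftUnitor_inv_whiskerRight_comp_whiskerLeft {Y Z V : C} (g : 𝟙_ C ⟶ V) (f : Y ⟶ Z) :
    (λ_ Y).inv ≫ (g ▷ Y) ≫ (V ◁ f) = f ≫ (λ_ Z).inv ≫ (g ▷ Z) := by
  rw [← whisker_exchange]; monoidal

section Cofree

variable {A : Mon_ C} (W : Cowreath A)

def cofreeAct (R : RMod A) : (R.carrier ⊗ W.X) ⊗ A.X ⟶ R.carrier ⊗ W.X :=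
  (α_ _ _ _).hom ≫ (R.carrier ◁ W.ψ) ≫ (α_ _ _ _).inv ≫ (R.act ▷ W.X)

def cofreeCoact (R : RMod A) : R.carrier ⊗ W.X ⟶ (R.carrier ⊗ W.X) ⊗ W.X :=
  (R.carrier ◁ W.δ) ≫ (α_ _ _ _).inv ≫ (R.act ▷ (W.X ⊗ W.X)) ≫ (α_ _ _ _).inv

lemma cofreeAct_one (R : RMod A) :
    ((R.carrier ⊗ W.X) ◁ A.one) ≫ cofreeAct W R = (ρ_ (R.carrier ⊗ W.X)).hom := by
  unfold cofreeAct
  calc ((R.carrier ⊗ W.X) ◁ A.one) ≫ (α_ _ _ _).hom ≫ (R.carrier ◁ W.ψ) ≫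
      (α_ _ _ _).inv ≫ (R.act ▷ W.X)
      = 𝟙 _ ⊗≫ (R.carrier ◁ ((W.X ◁ A.one) ≫ W.ψ)) ⊗≫ (R.act ▷ W.X) ⊗≫ 𝟙 _ := by
        monoidal
    _ = 𝟙 _ ⊗≫ (R.carrier ◁ ((ρ_ W.X).hom ≫ (λ_ W.X).inv ≫ (A.one ▷ W.X))) ⊗≫
          (R.act ▷ W.X) ⊗≫ 𝟙 _ := by rw [W.ψ_one]
    _ = 𝟙 _ ⊗≫ (((R.carrier ◁ A.one) ≫ R.act) ▷ W.X) ⊗≫ 𝟙 _ := by monoidal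
    _ = 𝟙 _ ⊗≫ ((ρ_ R.carrier).hom ▷ W.X) ⊗≫ 𝟙 _ := by rw [R.act_one]
    _ = (ρ_ (R.carrier ⊗ W.X)).hom := by monoidal

lemma cofreeAct_mul (R : RMod A) :
    (α_ (R.carrier ⊗ W.X) A.X A.X).inv ≫ (cofreeAct W R ▷ A.X) ≫ cofreeAct W R =
      ((R.carrier ⊗ W.X) ◁ A.mul) ≫ cofreeAct W R := by
  unfold cofreeAct
  calc (α_ _ _ _).inv ≫
      (((α_ _ _ _).hom ≫ (R.carrier ◁ W.ψ) ≫ (α_ _ _ _).inv ≫ (R.act ▷ W.X)) ▷ A.X) ≫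
      ((α_ _ _ _).hom ≫ (R.carrier ◁ W.ψ) ≫ (α_ _ _ _).inv ≫ (R.act ▷ W.X))
      = 𝟙 _ ⊗≫ (R.carrier ◁ (W.ψ ▷ A.X)) ⊗≫
          ((R.act ▷ (W.X ⊗ A.X)) ≫ (R.carrier ◁ W.ψ)) ⊗≫ (R.act ▷ W.X) ⊗≫ 𝟙 _ := by
        monoidal
    _ = 𝟙 _ ⊗≫ (R.carrier ◁ (W.ψ ▷ A.X)) ⊗≫
          (((R.carrier ⊗ A.X) ◁ W.ψ) ≫ (R.act ▷ (A.X ⊗ W.X))) ⊗≫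
          (R.act ▷ W.X) ⊗≫ 𝟙 _ := by rw [← whisker_exchange]
    _ = 𝟙 _ ⊗≫ (R.carrier ◁ (W.ψ ▷ A.X)) ⊗≫ ((R.carrier ⊗ A.X) ◁ W.ψ) ⊗≫
          (((α_ _ _ _).inv ≫ (R.act ▷ A.X) ≫ R.act) ▷ W.X) ⊗≫ 𝟙 _ := by monoidal
    _ = 𝟙 _ ⊗≫ (R.carrier ◁ (W.ψ ▷ A.X)) ⊗≫ ((R.carrier ⊗ A.X) ◁ W.ψ) ⊗≫
          (((R.carrier ◁ A.mul) ≫ R.act) ▷ W.X) ⊗≫ 𝟙 _ := by rw [R.act_mul]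
    _ = 𝟙 _ ⊗≫ (R.carrier ◁ ((α_ _ _ _).inv ≫ (W.ψ ▷ A.X) ≫ (α_ _ _ _).hom ≫
          (A.X ◁ W.ψ) ≫ (α_ _ _ _).inv ≫ (A.mul ▷ W.X))) ⊗≫ (R.act ▷ W.X) ⊗≫ 𝟙 _ := by
        monoidal
    _ = 𝟙 _ ⊗≫ (R.carrier ◁ ((W.X ◁ A.mul) ≫ W.ψ)) ⊗≫ (R.act ▷ W.X) ⊗≫ 𝟙 _ := by
        rw [← W.ψ_mul]
    _ = ((R.carrier ⊗ W.X) ◁ A.mul) ≫ (α_ _ _ _).hom ≫ (R.carrier ◁ W.ψ) ≫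
          (α_ _ _ _).inv ≫ (R.act ▷ W.X) := by monoidal

lemma cofreeAct_comp_cofreeCoact (R : RMod A) :
    cofreeAct W R ≫ cofreeCoact W R =
      (cofreeCoact W R ▷ A.X) ≫ (α_ (R.carrier ⊗ W.X) W.X A.X).hom ≫ ((R.carrier ⊗ W.X) ◁ W.ψ) ≫
        (α_ (R.carrier ⊗ W.X) A.X W.X).inv ≫ (cofreeAct W R ▷ W.X) := by
  unfold cofreeAct cofreeCoact
  calc ((α_ _ _ _).hom ≫ (R.carrier ◁ W.ψ) ≫ (α_ _ _ _).inv ≫ (R.act ▷ W.X)) ≫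
      ((R.carrier ◁ W.δ) ≫ (α_ _ _ _).inv ≫ (R.act ▷ (W.X ⊗ W.X)) ≫ (α_ _ _ _).inv)
      = 𝟙 _ ⊗≫ (R.carrier ◁ W.ψ) ⊗≫ ((R.act ▷ W.X) ≫ (R.carrier ◁ W.δ)) ⊗≫
          (R.act ▷ (W.X ⊗ W.X)) ⊗≫ 𝟙 _ := by monoidal
    _ = 𝟙 _ ⊗≫ (R.carrier ◁ W.ψ) ⊗≫ (((R.carrier ⊗ A.X) ◁ W.δ) ≫
          (R.act ▷ (A.X ⊗ (W.X ⊗ W.X)))) ⊗≫ (R.act ▷ (W.X ⊗ W.X)) ⊗≫ 𝟙 _ := by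
        rw [← whisker_exchange]
    _ = 𝟙 _ ⊗≫ (R.carrier ◁ W.ψ) ⊗≫ ((R.carrier ⊗ A.X) ◁ W.δ) ⊗≫
          (((α_ _ _ _).inv ≫ (R.act ▷ A.X) ≫ R.act) ▷ (W.X ⊗ W.X)) ⊗≫ 𝟙 _ := by
        monoidal
    _ = 𝟙 _ ⊗≫ (R.carrier ◁ W.ψ) ⊗≫ ((R.carrier ⊗ A.X) ◁ W.δ) ⊗≫
          (((R.carrier ◁ A.mul) ≫ R.act) ▷ (W.X ⊗ W.X)) ⊗≫ 𝟙 _ := by rw [R.act_mul]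
    _ = 𝟙 _ ⊗≫ (R.carrier ◁ (W.ψ ≫ (A.X ◁ W.δ) ≫ (α_ _ _ _).inv ≫
          (A.mul ▷ (W.X ⊗ W.X)))) ⊗≫ (R.act ▷ (W.X ⊗ W.X)) ⊗≫ 𝟙 _ := by monoidal
    _ = 𝟙 _ ⊗≫ (R.carrier ◁ ((W.δ ▷ A.X) ≫ (α_ A.X (W.X ⊗ W.X) A.X).hom ≫
          (A.X ◁ (α_ W.X W.X A.X).hom) ≫ (A.X ◁ (W.X ◁ W.ψ)) ≫
          (A.X ◁ (α_ W.X A.X W.X).inv) ≫ (A.X ◁ (W.ψ ▷ W.X)) ≫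
          (A.X ◁ (α_ A.X W.X W.X).hom) ≫ (α_ A.X A.X (W.X ⊗ W.X)).inv ≫
          (A.mul ▷ (W.X ⊗ W.X)))) ⊗≫ (R.act ▷ (W.X ⊗ W.X)) ⊗≫ 𝟙 _ := by
        rw [W.δ_compat]
    _ = 𝟙 _ ⊗≫ (R.carrier ◁ (W.δ ▷ A.X)) ⊗≫
          ((R.carrier ⊗ A.X) ◁ ((α_ W.X W.X A.X).hom ≫ (W.X ◁ W.ψ) ≫
            (α_ W.X A.X W.X).inv ≫ (W.ψ ▷ W.X) ≫ (α_ A.X W.X W.X).hom)) ⊗≫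
          (((R.carrier ◁ A.mul) ≫ R.act) ▷ (W.X ⊗ W.X)) ⊗≫ 𝟙 _ := by monoidal
    _ = 𝟙 _ ⊗≫ (R.carrier ◁ (W.δ ▷ A.X)) ⊗≫
          ((R.carrier ⊗ A.X) ◁ ((α_ W.X W.X A.X).hom ≫ (W.X ◁ W.ψ) ≫
            (α_ W.X A.X W.X).inv ≫ (W.ψ ▷ W.X) ≫ (α_ A.X W.X W.X).hom)) ⊗≫
          (((α_ _ _ _).inv ≫ (R.act ▷ A.X) ≫ R.act) ▷ (W.X ⊗ W.X)) ⊗≫ 𝟙 _ := by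
        rw [← R.act_mul]
    _ = 𝟙 _ ⊗≫ (R.carrier ◁ (W.δ ▷ A.X)) ⊗≫
          (((R.carrier ⊗ A.X) ◁ ((α_ W.X W.X A.X).hom ≫ (W.X ◁ W.ψ) ≫
            (α_ W.X A.X W.X).inv ≫ (W.ψ ▷ W.X) ≫ (α_ A.X W.X W.X).hom)) ≫
            (R.act ▷ (A.X ⊗ (W.X ⊗ W.X)))) ⊗≫ (R.act ▷ (W.X ⊗ W.X)) ⊗≫ 𝟙 _ := by
        monoidal
    _ = 𝟙 _ ⊗≫ (R.carrier ◁ (W.δ ▷ A.X)) ⊗≫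
          ((R.act ▷ ((W.X ⊗ W.X) ⊗ A.X)) ≫ (R.carrier ◁ ((α_ W.X W.X A.X).hom ≫
            (W.X ◁ W.ψ) ≫ (α_ W.X A.X W.X).inv ≫ (W.ψ ▷ W.X) ≫
            (α_ A.X W.X W.X).hom))) ⊗≫ (R.act ▷ (W.X ⊗ W.X)) ⊗≫ 𝟙 _ := by
        rw [whisker_exchange]
    _ = _ := by monoidal

lemma cofreeCoact_coassoc (R : RMod A) :
    cofreeCoact W R ≫ (cofreeCoact W R ▷ W.X) ≫ (α_ (R.carrier ⊗ W.X) W.X W.X).hom =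
      cofreeCoact W R ≫ ((R.carrier ⊗ W.X) ◁ W.δ) ≫
        (α_ (R.carrier ⊗ W.X) A.X (W.X ⊗ W.X)).inv ≫ (cofreeAct W R ▷ (W.X ⊗ W.X)) := by
  unfold cofreeAct cofreeCoact
  calc ((R.carrier ◁ W.δ) ≫ (α_ _ _ _).inv ≫ (R.act ▷ (W.X ⊗ W.X)) ≫ (α_ _ _ _).inv) ≫
      ((((R.carrier ◁ W.δ) ≫ (α_ _ _ _).inv ≫ (R.act ▷ (W.X ⊗ W.X)) ≫
        (α_ _ _ _).inv)) ▷ W.X) ≫ (α_ (R.carrier ⊗ W.X) W.X W.X).hom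
      = 𝟙 _ ⊗≫ (R.carrier ◁ W.δ) ⊗≫ ((R.act ▷ (W.X ⊗ W.X)) ≫
          (R.carrier ◁ (W.δ ▷ W.X))) ⊗≫ (R.act ▷ ((W.X ⊗ W.X) ⊗ W.X)) ⊗≫
          (R.carrier ◁ (α_ W.X W.X W.X).hom) ⊗≫ 𝟙 _ := by monoidal
    _ = 𝟙 _ ⊗≫ (R.carrier ◁ W.δ) ⊗≫ (((R.carrier ⊗ A.X) ◁ (W.δ ▷ W.X)) ≫
          (R.act ▷ ((A.X ⊗ (W.X ⊗ W.X)) ⊗ W.X))) ⊗≫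
          (R.act ▷ ((W.X ⊗ W.X) ⊗ W.X)) ⊗≫ (R.carrier ◁ (α_ W.X W.X W.X).hom) ⊗≫
          𝟙 _ := by rw [← whisker_exchange]
    _ = 𝟙 _ ⊗≫ (R.carrier ◁ W.δ) ⊗≫ ((R.carrier ⊗ A.X) ◁ (W.δ ▷ W.X)) ⊗≫
          (((α_ _ _ _).inv ≫ (R.act ▷ A.X) ≫ R.act) ▷ ((W.X ⊗ W.X) ⊗ W.X)) ⊗≫
          (R.carrier ◁ (α_ W.X W.X W.X).hom) ⊗≫ 𝟙 _ := by monoidal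
    _ = 𝟙 _ ⊗≫ (R.carrier ◁ W.δ) ⊗≫ ((R.carrier ⊗ A.X) ◁ (W.δ ▷ W.X)) ⊗≫
          (((R.carrier ◁ A.mul) ≫ R.act) ▷ ((W.X ⊗ W.X) ⊗ W.X)) ⊗≫
          (R.carrier ◁ (α_ W.X W.X W.X).hom) ⊗≫ 𝟙 _ := by rw [R.act_mul]
    _ = 𝟙 _ ⊗≫ (R.carrier ◁ (W.δ ≫ (A.X ◁ (W.δ ▷ W.X)) ≫
          (A.X ◁ (α_ A.X (W.X ⊗ W.X) W.X).hom) ≫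
          (α_ A.X A.X ((W.X ⊗ W.X) ⊗ W.X)).inv ≫ (A.mul ▷ ((W.X ⊗ W.X) ⊗ W.X)) ≫
          (A.X ◁ (α_ W.X W.X W.X).hom))) ⊗≫ (R.act ▷ (W.X ⊗ (W.X ⊗ W.X))) ⊗≫ 𝟙 _ := by
        monoidal
    _ = 𝟙 _ ⊗≫ (R.carrier ◁ (W.δ ≫ (A.X ◁ (W.X ◁ W.δ)) ≫
          (A.X ◁ (α_ W.X A.X (W.X ⊗ W.X)).inv) ≫ (A.X ◁ (W.ψ ▷ (W.X ⊗ W.X))) ≫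
          (A.X ◁ (α_ A.X W.X (W.X ⊗ W.X)).hom) ≫
          (α_ A.X A.X (W.X ⊗ (W.X ⊗ W.X))).inv ≫
          (A.mul ▷ (W.X ⊗ (W.X ⊗ W.X))))) ⊗≫ (R.act ▷ (W.X ⊗ (W.X ⊗ W.X))) ⊗≫ 𝟙 _ := by
        rw [W.δ_coassoc]
    _ = 𝟙 _ ⊗≫ (R.carrier ◁ W.δ) ⊗≫
          ((R.carrier ⊗ A.X) ◁ ((W.X ◁ W.δ) ≫ (α_ W.X A.X (W.X ⊗ W.X)).inv ≫
            (W.ψ ▷ (W.X ⊗ W.X)))) ⊗≫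
          (((R.carrier ◁ A.mul) ≫ R.act) ▷ (W.X ⊗ (W.X ⊗ W.X))) ⊗≫ 𝟙 _ := by monoidal
    _ = 𝟙 _ ⊗≫ (R.carrier ◁ W.δ) ⊗≫
          ((R.carrier ⊗ A.X) ◁ ((W.X ◁ W.δ) ≫ (α_ W.X A.X (W.X ⊗ W.X)).inv ≫
            (W.ψ ▷ (W.X ⊗ W.X)))) ⊗≫
          (((α_ _ _ _).inv ≫ (R.act ▷ A.X) ≫ R.act) ▷ (W.X ⊗ (W.X ⊗ W.X))) ⊗≫ 𝟙 _ := by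
        rw [← R.act_mul]
    _ = 𝟙 _ ⊗≫ (R.carrier ◁ W.δ) ⊗≫
          (((R.carrier ⊗ A.X) ◁ ((W.X ◁ W.δ) ≫ (α_ W.X A.X (W.X ⊗ W.X)).inv ≫
            (W.ψ ▷ (W.X ⊗ W.X)))) ≫ (R.act ▷ ((A.X ⊗ W.X) ⊗ (W.X ⊗ W.X)))) ⊗≫
          (R.act ▷ (W.X ⊗ (W.X ⊗ W.X))) ⊗≫ 𝟙 _ := by monoidal
    _ = 𝟙 _ ⊗≫ (R.carrier ◁ W.δ) ⊗≫
          ((R.act ▷ (W.X ⊗ W.X)) ≫ (R.carrier ◁ ((W.X ◁ W.δ) ≫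
            (α_ W.X A.X (W.X ⊗ W.X)).inv ≫ (W.ψ ▷ (W.X ⊗ W.X))))) ⊗≫
          (R.act ▷ (W.X ⊗ (W.X ⊗ W.X))) ⊗≫ 𝟙 _ := by rw [whisker_exchange]
    _ = _ := by monoidal

lemma cofreeCoact_counit (R : RMod A) :
    cofreeCoact W R ≫ ((R.carrier ⊗ W.X) ◁ W.ε) ≫ cofreeAct W R = 𝟙 (R.carrier ⊗ W.X) := by
  unfold cofreeAct cofreeCoact
  calc ((R.carrier ◁ W.δ) ≫ (α_ _ _ _).inv ≫ (R.act ▷ (W.X ⊗ W.X)) ≫ (α_ _ _ _).inv) ≫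
      ((R.carrier ⊗ W.X) ◁ W.ε) ≫
      ((α_ _ _ _).hom ≫ (R.carrier ◁ W.ψ) ≫ (α_ _ _ _).inv ≫ (R.act ▷ W.X))
      = 𝟙 _ ⊗≫ (R.carrier ◁ W.δ) ⊗≫ ((R.act ▷ (W.X ⊗ W.X)) ≫
          (R.carrier ◁ ((W.X ◁ W.ε) ≫ W.ψ))) ⊗≫ (R.act ▷ W.X) ⊗≫ 𝟙 _ := by monoidal
    _ = 𝟙 _ ⊗≫ (R.carrier ◁ W.δ) ⊗≫ (((R.carrier ⊗ A.X) ◁ ((W.X ◁ W.ε) ≫ W.ψ)) ≫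
          (R.act ▷ (A.X ⊗ W.X))) ⊗≫ (R.act ▷ W.X) ⊗≫ 𝟙 _ := by
        rw [← whisker_exchange]
    _ = 𝟙 _ ⊗≫ (R.carrier ◁ W.δ) ⊗≫ ((R.carrier ⊗ A.X) ◁ ((W.X ◁ W.ε) ≫ W.ψ)) ⊗≫
          (((α_ _ _ _).inv ≫ (R.act ▷ A.X) ≫ R.act) ▷ W.X) ⊗≫ 𝟙 _ := by monoidal
    _ = 𝟙 _ ⊗≫ (R.carrier ◁ W.δ) ⊗≫ ((R.carrier ⊗ A.X) ◁ ((W.X ◁ W.ε) ≫ W.ψ)) ⊗≫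
          (((R.carrier ◁ A.mul) ≫ R.act) ▷ W.X) ⊗≫ 𝟙 _ := by rw [R.act_mul]
    _ = 𝟙 _ ⊗≫ (R.carrier ◁ (W.δ ≫ (A.X ◁ (W.X ◁ W.ε)) ≫ (A.X ◁ W.ψ) ≫
          (α_ A.X A.X W.X).inv ≫ (A.mul ▷ W.X))) ⊗≫ (R.act ▷ W.X) ⊗≫ 𝟙 _ := by
        monoidal
    _ = 𝟙 _ ⊗≫ (R.carrier ◁ ((λ_ W.X).inv ≫ (A.one ▷ W.X))) ⊗≫ (R.act ▷ W.X) ⊗≫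
          𝟙 _ := by rw [W.counit_right]
    _ = 𝟙 _ ⊗≫ (((R.carrier ◁ A.one) ≫ R.act) ▷ W.X) ⊗≫ 𝟙 _ := by monoidal
    _ = 𝟙 _ ⊗≫ ((ρ_ R.carrier).hom ▷ W.X) ⊗≫ 𝟙 _ := by rw [R.act_one]
    _ = 𝟙 (R.carrier ⊗ W.X) := by monoidal

def cofreeEnt (R : RMod A) : Ent A W where
  carrier := R.carrier ⊗ W.X
  act := cofreeAct W R
  act_one := cofreeAct_one W R
  act_mul := cofreeAct_mul W R
  coact := cofreeCoact W R
  coact_linear := cofreeAct_comp_cofreeCoact W R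
  coact_coassoc := cofreeCoact_coassoc W R
  coact_counit := cofreeCoact_counit W R

def cofreeEntMap {R S : RMod A} (φ : R ⟶ S) : cofreeEnt W R ⟶ cofreeEnt W S where
  hom := φ.hom ▷ W.X
  linear := by
    show cofreeAct W R ≫ (φ.hom ▷ W.X) = ((φ.hom ▷ W.X) ▷ A.X) ≫ cofreeAct W S
    unfold cofreeAct
    calc ((α_ _ _ _).hom ≫ (R.carrier ◁ W.ψ) ≫ (α_ _ _ _).inv ≫ (R.act ▷ W.X)) ≫
        (φ.hom ▷ W.X)
        = 𝟙 _ ⊗≫ (R.carrier ◁ W.ψ) ⊗≫ ((R.act ≫ φ.hom) ▷ W.X) ⊗≫ 𝟙 _ := by monoidal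
      _ = 𝟙 _ ⊗≫ (R.carrier ◁ W.ψ) ⊗≫ (((φ.hom ▷ A.X) ≫ S.act) ▷ W.X) ⊗≫ 𝟙 _ := by
          rw [φ.linear]
      _ = 𝟙 _ ⊗≫ ((R.carrier ◁ W.ψ) ≫ (φ.hom ▷ (A.X ⊗ W.X))) ⊗≫ (S.act ▷ W.X) ⊗≫
            𝟙 _ := by monoidal
      _ = 𝟙 _ ⊗≫ ((φ.hom ▷ (W.X ⊗ A.X)) ≫ (S.carrier ◁ W.ψ)) ⊗≫ (S.act ▷ W.X) ⊗≫
            𝟙 _ := by rw [whisker_exchange]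
      _ = _ := by monoidal
  colinear := by
    show cofreeCoact W R ≫ ((φ.hom ▷ W.X) ▷ W.X) = (φ.hom ▷ W.X) ≫ cofreeCoact W S
    unfold cofreeCoact
    calc ((R.carrier ◁ W.δ) ≫ (α_ _ _ _).inv ≫ (R.act ▷ (W.X ⊗ W.X)) ≫ (α_ _ _ _).inv) ≫
        ((φ.hom ▷ W.X) ▷ W.X)
        = 𝟙 _ ⊗≫ (R.carrier ◁ W.δ) ⊗≫ ((R.act ≫ φ.hom) ▷ (W.X ⊗ W.X)) ⊗≫ 𝟙 _ := by
          monoidal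
      _ = 𝟙 _ ⊗≫ (R.carrier ◁ W.δ) ⊗≫ (((φ.hom ▷ A.X) ≫ S.act) ▷ (W.X ⊗ W.X)) ⊗≫
            𝟙 _ := by rw [φ.linear]
      _ = 𝟙 _ ⊗≫ ((R.carrier ◁ W.δ) ≫ (φ.hom ▷ (A.X ⊗ (W.X ⊗ W.X)))) ⊗≫
            (S.act ▷ (W.X ⊗ W.X)) ⊗≫ 𝟙 _ := by monoidal
      _ = 𝟙 _ ⊗≫ ((φ.hom ▷ W.X) ≫ (S.carrier ◁ W.δ)) ⊗≫ (S.act ▷ (W.X ⊗ W.X)) ⊗≫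
            𝟙 _ := by rw [whisker_exchange]
      _ = _ := by monoidal

def cofreeFunctor : RMod A ⥤ Ent A W where
  obj := cofreeEnt W
  map := cofreeEntMap W
  map_id _ := EntHom.ext (id_whiskerRight _ _)
  map_comp _ _ := EntHom.ext (comp_whiskerRight _ _ _)

def cofreeCounit (R : RMod A) : (forgetF A W).obj (cofreeEnt W R) ⟶ R where
  hom := (R.carrier ◁ W.ε) ≫ R.act
  linear := by
    show cofreeAct W R ≫ (R.carrier ◁ W.ε) ≫ R.act = (((R.carrier ◁ W.ε) ≫ R.act) ▷ A.X) ≫ R.act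
    unfold cofreeAct
    calc ((α_ _ _ _).hom ≫ (R.carrier ◁ W.ψ) ≫ (α_ _ _ _).inv ≫ (R.act ▷ W.X)) ≫
        ((R.carrier ◁ W.ε) ≫ R.act)
        = 𝟙 _ ⊗≫ (R.carrier ◁ W.ψ) ⊗≫ ((R.act ▷ W.X) ≫ (R.carrier ◁ W.ε)) ≫
            R.act := by monoidal
      _ = 𝟙 _ ⊗≫ (R.carrier ◁ W.ψ) ⊗≫ (((R.carrier ⊗ A.X) ◁ W.ε) ≫
            (R.act ▷ A.X)) ≫ R.act := by rw [← whisker_exchange]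
      _ = 𝟙 _ ⊗≫ (R.carrier ◁ W.ψ) ⊗≫ ((R.carrier ⊗ A.X) ◁ W.ε) ⊗≫
            ((α_ _ _ _).inv ≫ (R.act ▷ A.X) ≫ R.act) := by monoidal
      _ = 𝟙 _ ⊗≫ (R.carrier ◁ W.ψ) ⊗≫ ((R.carrier ⊗ A.X) ◁ W.ε) ⊗≫
            ((R.carrier ◁ A.mul) ≫ R.act) := by rw [R.act_mul]
      _ = 𝟙 _ ⊗≫ (R.carrier ◁ (W.ψ ≫ (A.X ◁ W.ε) ≫ A.mul)) ⊗≫ R.act := by monoidal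
      _ = 𝟙 _ ⊗≫ (R.carrier ◁ ((W.ε ▷ A.X) ≫ A.mul)) ⊗≫ R.act := by rw [W.ε_compat]
      _ = 𝟙 _ ⊗≫ (R.carrier ◁ (W.ε ▷ A.X)) ⊗≫ ((R.carrier ◁ A.mul) ≫ R.act) := by
          monoidal
      _ = 𝟙 _ ⊗≫ (R.carrier ◁ (W.ε ▷ A.X)) ⊗≫
            ((α_ _ _ _).inv ≫ (R.act ▷ A.X) ≫ R.act) := by rw [← R.act_mul]
      _ = _ := by monoidal

lemma Ent.coact_comp_coact_whiskerRight {W : Cowreath A} (M : Ent A W) :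
    M.coact ≫ (M.coact ▷ W.X) = M.coact ≫ (M.carrier ◁ W.δ) ≫
      (α_ M.carrier A.X (W.X ⊗ W.X)).inv ≫ (M.act ▷ (W.X ⊗ W.X)) ≫
      (α_ M.carrier W.X W.X).inv := by
  rw [← cancel_mono (α_ M.carrier W.X W.X).hom]
  simpa using M.coact_coassoc

def coactHom (M : Ent A W) : M ⟶ (cofreeFunctor W).obj ((forgetF A W).obj M) where
  hom := M.coact
  linear := M.coact_linear
  colinear := M.coact_comp_coact_whiskerRight

lemma cofreeCoact_comp_counit_whiskerRight (R : RMod A) :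
    cofreeCoact W R ≫ (((R.carrier ◁ W.ε) ≫ R.act) ▷ W.X) = 𝟙 (R.carrier ⊗ W.X) := by
  unfold cofreeCoact
  calc ((R.carrier ◁ W.δ) ≫ (α_ _ _ _).inv ≫ (R.act ▷ (W.X ⊗ W.X)) ≫ (α_ _ _ _).inv) ≫
      (((R.carrier ◁ W.ε) ≫ R.act) ▷ W.X)
      = 𝟙 _ ⊗≫ (R.carrier ◁ W.δ) ⊗≫ ((R.act ▷ (W.X ⊗ W.X)) ≫
          (R.carrier ◁ (W.ε ▷ W.X))) ⊗≫ (R.act ▷ W.X) ⊗≫ 𝟙 _ := by monoidal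
    _ = 𝟙 _ ⊗≫ (R.carrier ◁ W.δ) ⊗≫ (((R.carrier ⊗ A.X) ◁ (W.ε ▷ W.X)) ≫
          (R.act ▷ (A.X ⊗ W.X))) ⊗≫ (R.act ▷ W.X) ⊗≫ 𝟙 _ := by rw [← whisker_exchange]
    _ = 𝟙 _ ⊗≫ (R.carrier ◁ W.δ) ⊗≫ ((R.carrier ⊗ A.X) ◁ (W.ε ▷ W.X)) ⊗≫
          (((α_ _ _ _).inv ≫ (R.act ▷ A.X) ≫ R.act) ▷ W.X) ⊗≫ 𝟙 _ := by monoidal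
    _ = 𝟙 _ ⊗≫ (R.carrier ◁ W.δ) ⊗≫ ((R.carrier ⊗ A.X) ◁ (W.ε ▷ W.X)) ⊗≫
          (((R.carrier ◁ A.mul) ≫ R.act) ▷ W.X) ⊗≫ 𝟙 _ := by rw [R.act_mul]
    _ = 𝟙 _ ⊗≫ (R.carrier ◁ (W.δ ≫ (A.X ◁ (W.ε ▷ W.X)) ≫ (α_ A.X A.X W.X).inv ≫
          (A.mul ▷ W.X))) ⊗≫ (R.act ▷ W.X) ⊗≫ 𝟙 _ := by monoidal
    _ = 𝟙 _ ⊗≫ (R.carrier ◁ ((λ_ W.X).inv ≫ (A.one ▷ W.X))) ⊗≫ (R.act ▷ W.X) ⊗≫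
          𝟙 _ := by rw [W.counit_left]
    _ = 𝟙 _ ⊗≫ (((R.carrier ◁ A.one) ≫ R.act) ▷ W.X) ⊗≫ 𝟙 _ := by monoidal
    _ = 𝟙 _ ⊗≫ ((ρ_ R.carrier).hom ▷ W.X) ⊗≫ 𝟙 _ := by rw [R.act_one]
    _ = 𝟙 (R.carrier ⊗ W.X) := by monoidal

def cofreeAdjunction : forgetF A W ⊣ cofreeFunctor W where
  unit := { app := coactHom W, naturality := fun _ _ f => EntHom.ext f.colinear.symm }
  counit :=
    { app := cofreeCounit W
      naturality := fun R S φ => RModHom.ext <| by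
        show (φ.hom ▷ W.X) ≫ (S.carrier ◁ W.ε) ≫ S.act = ((R.carrier ◁ W.ε) ≫ R.act) ≫ φ.hom
        rw [← whisker_exchange_assoc, ← φ.linear, Category.assoc] }
  left_triangle_components M := RModHom.ext (M.coact_counit : M.coact ≫ _ ≫ _ = _)
  right_triangle_components R := EntHom.ext (cofreeCoact_comp_counit_whiskerRight W R)

end Cofree

section CasimirRetraction

variable {A : Mon_ C} (W : Cowreath A)

/-- `B : X ⊗ X ⟶ A` is a morphism `X ⊗ X ⟶ 𝟙` of `T_A^#`. -/
def Cowreath.IsPairingMorphism (B : W.X ⊗ W.X ⟶ A.X) : Prop :=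
  (α_ W.X W.X A.X).inv ≫ (B ▷ A.X) ≫ A.mul =
    (W.X ◁ W.ψ) ≫ (α_ W.X A.X W.X).inv ≫ (W.ψ ▷ W.X) ≫ (α_ A.X W.X W.X).hom ≫
      (A.X ◁ B) ≫ A.mul

/-- Condition (c) of Lemma 4.3: `B` is a Casimir morphism for the coalgebra `(X, ψ)`. -/
def Cowreath.IsCasimir (B : W.X ⊗ W.X ⟶ A.X) : Prop :=
  (W.δ ▷ W.X) ≫ (α_ A.X (W.X ⊗ W.X) W.X).hom ≫ (A.X ◁ (α_ W.X W.X W.X).hom) ≫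
      (A.X ◁ (W.X ◁ B)) ≫ (A.X ◁ W.ψ) ≫ (α_ A.X A.X W.X).inv ≫ (A.mul ▷ W.X) =
    (W.X ◁ W.δ) ≫ (α_ W.X A.X (W.X ⊗ W.X)).inv ≫ (W.ψ ▷ (W.X ⊗ W.X)) ≫
      (α_ A.X W.X (W.X ⊗ W.X)).hom ≫ (A.X ◁ (α_ W.X W.X W.X).inv) ≫
      (A.X ◁ (B ▷ W.X)) ≫ (α_ A.X A.X W.X).inv ≫ (A.mul ▷ W.X)

def casimirRetractionHom (B : W.X ⊗ W.X ⟶ A.X) (N : Ent A W) : N.carrier ⊗ W.X ⟶ N.carrier :=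
  (N.coact ▷ W.X) ≫ (α_ _ _ _).hom ≫ (N.carrier ◁ B) ≫ N.act

variable {W}

lemma casimirRetractionHom_linear {B : W.X ⊗ W.X ⟶ A.X}
    (hB : W.IsPairingMorphism B) (N : Ent A W) :
    cofreeAct W ((forgetF A W).obj N) ≫ casimirRetractionHom W B N =
      (casimirRetractionHom W B N ▷ A.X) ≫ N.act := by
  rcases N with ⟨N, a, -, a_mul, d, d_lin, -, -⟩
  dsimp only [casimirRetractionHom, cofreeAct, forgetF]
  calc ((α_ _ _ _).hom ≫ (N ◁ W.ψ) ≫ (α_ _ _ _).inv ≫ (a ▷ W.X)) ≫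
        (d ▷ W.X) ≫ (α_ _ _ _).hom ≫ (N ◁ B) ≫ a
      = 𝟙 _ ⊗≫ (N ◁ W.ψ) ⊗≫ ((a ≫ d) ▷ W.X) ⊗≫ (N ◁ B) ⊗≫ a := by monoidal
    _ = 𝟙 _ ⊗≫ (N ◁ W.ψ) ⊗≫
          (((d ▷ A.X) ≫ (α_ N W.X A.X).hom ≫ (N ◁ W.ψ) ≫ (α_ N A.X W.X).inv ≫ (a ▷ W.X)) ▷
            W.X) ⊗≫ (N ◁ B) ⊗≫ a := by rw [d_lin]
    _ = 𝟙 _ ⊗≫ ((N ◁ W.ψ) ≫ (d ▷ (A.X ⊗ W.X))) ⊗≫ ((N ◁ W.ψ) ▷ W.X) ⊗≫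
          ((a ▷ (W.X ⊗ W.X)) ≫ (N ◁ B)) ⊗≫ a := by monoidal
    _ = 𝟙 _ ⊗≫ ((d ▷ (W.X ⊗ A.X)) ≫ ((N ⊗ W.X) ◁ W.ψ)) ⊗≫ ((N ◁ W.ψ) ▷ W.X) ⊗≫
          (((N ⊗ A.X) ◁ B) ≫ (a ▷ A.X)) ⊗≫ a := by
        rw [whisker_exchange d W.ψ, ← whisker_exchange a B]
    _ = 𝟙 _ ⊗≫ (d ▷ (W.X ⊗ A.X)) ⊗≫ ((N ⊗ W.X) ◁ W.ψ) ⊗≫ ((N ◁ W.ψ) ▷ W.X) ⊗≫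
          ((N ⊗ A.X) ◁ B) ⊗≫ ((α_ N A.X A.X).inv ≫ (a ▷ A.X) ≫ a) := by monoidal
    _ = 𝟙 _ ⊗≫ (d ▷ (W.X ⊗ A.X)) ⊗≫
          (N ◁ ((W.X ◁ W.ψ) ≫ (α_ W.X A.X W.X).inv ≫ (W.ψ ▷ W.X) ≫ (α_ A.X W.X W.X).hom ≫
            (A.X ◁ B) ≫ A.mul)) ⊗≫ a := by rw [a_mul]; monoidal
    _ = 𝟙 _ ⊗≫ (d ▷ (W.X ⊗ A.X)) ⊗≫ (N ◁ ((α_ W.X W.X A.X).inv ≫ (B ▷ A.X) ≫ A.mul)) ⊗≫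
          a := by rw [hB]
    _ = 𝟙 _ ⊗≫ (d ▷ (W.X ⊗ A.X)) ⊗≫ (N ◁ (B ▷ A.X)) ⊗≫
          ((α_ N A.X A.X).inv ≫ (a ▷ A.X) ≫ a) := by rw [a_mul]; monoidal
    _ = _ := by monoidal

lemma casimirRetractionHom_colinear {B : W.X ⊗ W.X ⟶ A.X}
    (hB : W.IsCasimir B) (N : Ent A W) :
    cofreeCoact W ((forgetF A W).obj N) ≫ (casimirRetractionHom W B N ▷ W.X) =
      casimirRetractionHom W B N ≫ N.coact := by
  have d_coassoc := N.coact_comp_coact_whiskerRight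
  revert d_coassoc
  rcases N with ⟨N, a, -, a_mul, d, d_lin, -, -⟩
  intro d_coassoc
  dsimp only [casimirRetractionHom, cofreeCoact, forgetF] at d_coassoc ⊢
  calc ((N ◁ W.δ) ≫ (α_ _ _ _).inv ≫ (a ▷ (W.X ⊗ W.X)) ≫ (α_ _ _ _).inv) ≫
        (((d ▷ W.X) ≫ (α_ _ _ _).hom ≫ (N ◁ B) ≫ a) ▷ W.X)
      = 𝟙 _ ⊗≫ (N ◁ W.δ) ⊗≫ ((a ≫ d) ▷ (W.X ⊗ W.X)) ⊗≫ ((N ◁ B) ▷ W.X) ⊗≫ (a ▷ W.X) ⊗≫ 𝟙 _ := by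
        monoidal
    _ = 𝟙 _ ⊗≫ (N ◁ W.δ) ⊗≫
          (((d ▷ A.X) ≫ (α_ N W.X A.X).hom ≫ (N ◁ W.ψ) ≫ (α_ N A.X W.X).inv ≫ (a ▷ W.X)) ▷
            (W.X ⊗ W.X)) ⊗≫ ((N ◁ B) ▷ W.X) ⊗≫ (a ▷ W.X) ⊗≫ 𝟙 _ := by rw [d_lin]
    _ = 𝟙 _ ⊗≫ ((N ◁ W.δ) ≫ (d ▷ (A.X ⊗ (W.X ⊗ W.X)))) ⊗≫ ((N ◁ W.ψ) ▷ (W.X ⊗ W.X)) ⊗≫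
          ((a ▷ ((W.X ⊗ W.X) ⊗ W.X)) ≫ (N ◁ (B ▷ W.X))) ⊗≫ (a ▷ W.X) ⊗≫ 𝟙 _ := by monoidal
    _ = 𝟙 _ ⊗≫ ((d ▷ W.X) ≫ ((N ⊗ W.X) ◁ W.δ)) ⊗≫ ((N ◁ W.ψ) ▷ (W.X ⊗ W.X)) ⊗≫
          (((N ⊗ A.X) ◁ (B ▷ W.X)) ≫ (a ▷ (A.X ⊗ W.X))) ⊗≫ (a ▷ W.X) ⊗≫ 𝟙 _ := by
        rw [whisker_exchange d W.δ, ← whisker_exchange a (B ▷ W.X)]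
    _ = 𝟙 _ ⊗≫ (d ▷ W.X) ⊗≫ ((N ⊗ W.X) ◁ W.δ) ⊗≫ ((N ◁ W.ψ) ▷ (W.X ⊗ W.X)) ⊗≫
          ((N ⊗ A.X) ◁ (B ▷ W.X)) ⊗≫ (((α_ N A.X A.X).inv ≫ (a ▷ A.X) ≫ a) ▷ W.X) ⊗≫ 𝟙 _ := by
        monoidal
    _ = 𝟙 _ ⊗≫ (d ▷ W.X) ⊗≫
          (N ◁ ((W.X ◁ W.δ) ≫ (α_ W.X A.X (W.X ⊗ W.X)).inv ≫ (W.ψ ▷ (W.X ⊗ W.X)) ≫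
            (α_ A.X W.X (W.X ⊗ W.X)).hom ≫ (A.X ◁ (α_ W.X W.X W.X).inv) ≫
            (A.X ◁ (B ▷ W.X)) ≫ (α_ A.X A.X W.X).inv ≫ (A.mul ▷ W.X))) ⊗≫ (a ▷ W.X) ⊗≫ 𝟙 _ := by
        rw [a_mul]; monoidal
    _ = 𝟙 _ ⊗≫ (d ▷ W.X) ⊗≫
          (N ◁ ((W.δ ▷ W.X) ≫ (α_ A.X (W.X ⊗ W.X) W.X).hom ≫ (A.X ◁ (α_ W.X W.X W.X).hom) ≫
            (A.X ◁ (W.X ◁ B)) ≫ (A.X ◁ W.ψ) ≫ (α_ A.X A.X W.X).inv ≫ (A.mul ▷ W.X))) ⊗≫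
          (a ▷ W.X) ⊗≫ 𝟙 _ := by rw [← hB]
    _ = 𝟙 _ ⊗≫ (d ▷ W.X) ⊗≫ (N ◁ (W.δ ▷ W.X)) ⊗≫
          ((N ⊗ A.X) ◁ ((α_ W.X W.X W.X).hom ≫ (W.X ◁ B) ≫ W.ψ)) ⊗≫
          (((N ◁ A.mul) ≫ a) ▷ W.X) ⊗≫ 𝟙 _ := by monoidal
    _ = 𝟙 _ ⊗≫ (d ▷ W.X) ⊗≫ (N ◁ (W.δ ▷ W.X)) ⊗≫
          (((N ⊗ A.X) ◁ ((α_ W.X W.X W.X).hom ≫ (W.X ◁ B) ≫ W.ψ)) ≫ (a ▷ (A.X ⊗ W.X))) ⊗≫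
          (a ▷ W.X) ⊗≫ 𝟙 _ := by rw [← a_mul]; monoidal
    _ = 𝟙 _ ⊗≫ (d ▷ W.X) ⊗≫ (N ◁ (W.δ ▷ W.X)) ⊗≫
          ((a ▷ ((W.X ⊗ W.X) ⊗ W.X)) ≫ (N ◁ ((α_ W.X W.X W.X).hom ≫ (W.X ◁ B) ≫ W.ψ))) ⊗≫
          (a ▷ W.X) ⊗≫ 𝟙 _ := by rw [whisker_exchange]
    _ = 𝟙 _ ⊗≫ ((d ≫ (N ◁ W.δ) ≫ (α_ N A.X (W.X ⊗ W.X)).inv ≫ (a ▷ (W.X ⊗ W.X)) ≫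
          (α_ N W.X W.X).inv) ▷ W.X) ⊗≫ (N ◁ ((α_ W.X W.X W.X).hom ≫ (W.X ◁ B) ≫ W.ψ)) ⊗≫
          (a ▷ W.X) ⊗≫ 𝟙 _ := by monoidal
    _ = 𝟙 _ ⊗≫ (d ▷ W.X) ⊗≫ ((d ▷ (W.X ⊗ W.X)) ≫ ((N ⊗ W.X) ◁ B)) ⊗≫ (N ◁ W.ψ) ⊗≫ (a ▷ W.X) ⊗≫
          𝟙 _ := by rw [← d_coassoc]; monoidal
    _ = 𝟙 _ ⊗≫ (d ▷ W.X) ⊗≫ (N ◁ B) ⊗≫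
          ((d ▷ A.X) ≫ (α_ N W.X A.X).hom ≫ (N ◁ W.ψ) ≫ (α_ N A.X W.X).inv ≫ (a ▷ W.X)) := by
        rw [← whisker_exchange]; monoidal
    _ = _ := by rw [← d_lin]; monoidal

lemma casimirRetractionHom_naturality (B : W.X ⊗ W.X ⟶ A.X) {M N : Ent A W} (f : M ⟶ N) :
    (f.hom ▷ W.X) ≫ casimirRetractionHom W B N = casimirRetractionHom W B M ≫ f.hom := by
  dsimp only [casimirRetractionHom]
  calc (f.hom ▷ W.X) ≫ (N.coact ▷ W.X) ≫ (α_ _ _ _).hom ≫ (N.carrier ◁ B) ≫ N.act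
      = ((M.coact ≫ (f.hom ▷ W.X)) ▷ W.X) ≫ (α_ _ _ _).hom ≫ (N.carrier ◁ B) ≫ N.act := by
        rw [f.colinear, comp_whiskerRight_assoc]
    _ = (M.coact ▷ W.X) ≫ (α_ _ _ _).hom ≫ ((f.hom ▷ (W.X ⊗ W.X)) ≫ (N.carrier ◁ B)) ≫
          N.act := by simp
    _ = (M.coact ▷ W.X) ≫ (α_ _ _ _).hom ≫ (M.carrier ◁ B) ≫ (f.hom ▷ A.X) ≫ N.act := by
        rw [← whisker_exchange, Category.assoc]
    _ = _ := by rw [← f.linear]; simp only [Category.assoc]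

lemma coact_comp_casimirRetractionHom {B : W.X ⊗ W.X ⟶ A.X} (hB : W.δ ≫ (A.X ◁ B) ≫ A.mul = W.ε)
    (N : Ent A W) : N.coact ≫ casimirRetractionHom W B N = 𝟙 N.carrier := by
  have d_coassoc := N.coact_comp_coact_whiskerRight
  revert d_coassoc
  rcases N with ⟨N, a, -, a_mul, d, -, -, d_counit⟩
  intro d_coassoc
  dsimp only [casimirRetractionHom] at d_coassoc ⊢
  calc d ≫ (d ▷ W.X) ≫ (α_ _ _ _).hom ≫ (N ◁ B) ≫ a
      = (d ≫ (d ▷ W.X)) ≫ (α_ _ _ _).hom ≫ (N ◁ B) ≫ a := by simp only [Category.assoc]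
    _ = 𝟙 _ ⊗≫ d ⊗≫ (N ◁ W.δ) ⊗≫ ((a ▷ (W.X ⊗ W.X)) ≫ (N ◁ B)) ⊗≫ a := by
        rw [d_coassoc]; monoidal
    _ = 𝟙 _ ⊗≫ d ⊗≫ (N ◁ W.δ) ⊗≫ ((N ⊗ A.X) ◁ B) ⊗≫
          ((α_ N A.X A.X).inv ≫ (a ▷ A.X) ≫ a) := by rw [← whisker_exchange]; monoidal
    _ = d ≫ (N ◁ (W.δ ≫ (A.X ◁ B) ≫ A.mul)) ≫ a := by rw [a_mul]; monoidal
    _ = 𝟙 N := by rw [hB, d_counit]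

def casimirRetraction {B : W.X ⊗ W.X ⟶ A.X} (hB_lin : W.IsPairingMorphism B)
    (hB_casimir : W.IsCasimir B) :
    forgetF A W ⋙ cofreeFunctor W ⟶ 𝟭 (Ent A W) where
  app N := ⟨casimirRetractionHom W B N, casimirRetractionHom_linear hB_lin N,
    casimirRetractionHom_colinear hB_casimir N⟩
  naturality _ _ f := EntHom.ext (casimirRetractionHom_naturality B f)

lemma unit_comp_casimirRetraction {B : W.X ⊗ W.X ⟶ A.X} (hB_lin : W.IsPairingMorphism B)
    (hB_casimir : W.IsCasimir B) (hB_counit : W.δ ≫ (A.X ◁ B) ≫ A.mul = W.ε) :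
    (cofreeAdjunction W).unit ≫ casimirRetraction hB_lin hB_casimir = 𝟙 _ :=
  NatTrans.ext (funext fun N => EntHom.ext (coact_comp_casimirRetractionHom hB_counit N))

end CasimirRetraction

section RegularModule

variable {A : Mon_ C}

def regModHomOfPoint (R : RMod A) (h : 𝟙_ C ⟶ R.carrier) : regMod A ⟶ R where
  hom := (λ_ A.X).inv ≫ (h ▷ A.X) ≫ R.act
  linear := by
    show A.mul ≫ (λ_ A.X).inv ≫ (h ▷ A.X) ≫ R.act =
      (((λ_ A.X).inv ≫ (h ▷ A.X) ≫ R.act) ▷ A.X) ≫ R.act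
    calc A.mul ≫ (λ_ A.X).inv ≫ (h ▷ A.X) ≫ R.act
        = ((λ_ (A.X ⊗ A.X)).inv ≫ (h ▷ (A.X ⊗ A.X)) ≫ (R.carrier ◁ A.mul)) ≫ R.act := by
          rw [leftUnitor_inv_whiskerRight_comp_whiskerLeft, Category.assoc, Category.assoc]
      _ = 𝟙 _ ⊗≫ (h ▷ (A.X ⊗ A.X)) ⊗≫ ((α_ _ _ _).inv ≫ (R.act ▷ A.X) ≫ R.act) := by
          rw [R.act_mul]; monoidal
      _ = _ := by monoidal

lemma one_comp_regModHomOfPoint (R : RMod A) (h : 𝟙_ C ⟶ R.carrier) :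
    A.one ≫ (regModHomOfPoint R h).hom = h := by
  show A.one ≫ (λ_ A.X).inv ≫ (h ▷ A.X) ≫ R.act = h
  calc A.one ≫ (λ_ A.X).inv ≫ (h ▷ A.X) ≫ R.act
      = ((λ_ (𝟙_ C)).inv ≫ (h ▷ (𝟙_ C)) ≫ (R.carrier ◁ A.one)) ≫ R.act := by
        rw [leftUnitor_inv_whiskerRight_comp_whiskerLeft, Category.assoc, Category.assoc]
    _ = 𝟙 _ ⊗≫ (h ▷ (𝟙_ C)) ⊗≫ (ρ_ R.carrier).hom := by rw [← R.act_one]; monoidal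
    _ = h := by monoidal

def UnitIsLeftTensorGenerator (C : Type*) [Category C] [MonoidalCategory C] : Prop :=
  ∀ {Y Z P : C} (f g : Y ⊗ Z ⟶ P), (∀ h : 𝟙_ C ⟶ Y, (h ▷ Z) ≫ f = (h ▷ Z) ≫ g) → f = g

/-- Every point `h : 𝟙 ⟶ R` is the image of the unit of `A` under the `A`-linear map
`regModHomOfPoint R h`. -/
lemma eq_of_naturality_regMod
    (hgen : UnitIsLeftTensorGenerator C) {R : RMod A} {Y Z V : C}
    (ΘR : (R.carrier ⊗ Y) ⊗ Z ⟶ R.carrier ⊗ V)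
    (ΘA : (A.X ⊗ Y) ⊗ Z ⟶ A.X ⊗ V)
    (hΘ : ∀ φ : regMod A ⟶ R, ((φ.hom ▷ Y) ▷ Z) ≫ ΘR = ΘA ≫ (φ.hom ▷ V)) :
    ΘR = (α_ _ _ _).hom ≫ (R.carrier ◁ ((((λ_ Y).inv ≫ (A.one ▷ Y)) ▷ Z) ≫ ΘA)) ≫
      (α_ _ _ _).inv ≫ (R.act ▷ V) := by
  rw [← Iso.inv_comp_eq]
  refine hgen _ _ fun h => ?_
  let f : A.X ⟶ R.carrier := (regModHomOfPoint R h).hom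
  have hf : ((f ▷ Y) ▷ Z) ≫ ΘR = ΘA ≫ (f ▷ V) := hΘ (regModHomOfPoint R h)
  calc (h ▷ (Y ⊗ Z)) ≫ (α_ R.carrier Y Z).inv ≫ ΘR
      = (α_ (𝟙_ C) Y Z).inv ≫ ((((A.one ≫ f) ▷ Y) ▷ Z) ≫ ΘR) := by
        rw [one_comp_regModHomOfPoint]; monoidal
    _ = (α_ (𝟙_ C) Y Z).inv ≫ ((A.one ▷ Y) ▷ Z) ≫ ΘA ≫ (f ▷ V) := by
        rw [comp_whiskerRight, comp_whiskerRight, Category.assoc, hf]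
    _ = (𝟙_ C ◁ ((((λ_ Y).inv ≫ (A.one ▷ Y)) ▷ Z) ≫ ΘA)) ≫ (α_ (𝟙_ C) A.X V).inv ≫
          (((h ▷ A.X) ≫ R.act) ▷ V) := by
        simp only [f, regModHomOfPoint]; monoidal
    _ = (h ▷ (Y ⊗ Z)) ≫ (R.carrier ◁ ((((λ_ Y).inv ≫ (A.one ▷ Y)) ▷ Z) ≫ ΘA)) ≫
          (α_ R.carrier A.X V).inv ≫ (R.act ▷ V) := by
        rw [← whisker_exchange_assoc]; monoidal

end RegularModule

section Pairing

variable {A : Mon_ C} {W : Cowreath A}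

lemma Cowreath.delta_comp_pairing_eq_counit {t : W.X ⊗ W.X ⟶ A.X ⊗ W.X}
    (ht : W.δ ≫ (A.X ◁ t) ≫ (α_ A.X A.X W.X).inv ≫ (A.mul ▷ W.X) =
      (λ_ W.X).inv ≫ (A.one ▷ W.X)) :
    W.δ ≫ (A.X ◁ (t ≫ (A.X ◁ W.ε) ≫ A.mul)) ≫ A.mul = W.ε := by
  calc W.δ ≫ (A.X ◁ (t ≫ (A.X ◁ W.ε) ≫ A.mul)) ≫ A.mul
      = 𝟙 _ ⊗≫ W.δ ⊗≫ (A.X ◁ t) ⊗≫ (A.X ◁ (A.X ◁ W.ε)) ⊗≫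
          ((α_ A.X A.X A.X).hom ≫ (A.X ◁ A.mul) ≫ A.mul) := by monoidal
    _ = 𝟙 _ ⊗≫ W.δ ⊗≫ (A.X ◁ t) ⊗≫ (((A.X ⊗ A.X) ◁ W.ε) ≫ (A.mul ▷ A.X)) ⊗≫
          A.mul := by rw [← A.mul_assoc]; monoidal
    _ = (W.δ ≫ (A.X ◁ t) ≫ (α_ A.X A.X W.X).inv ≫ (A.mul ▷ W.X)) ≫ (A.X ◁ W.ε) ≫ A.mul := by
        rw [whisker_exchange]; monoidal
    _ = ((λ_ W.X).inv ≫ (A.one ▷ W.X) ≫ (A.X ◁ W.ε)) ≫ A.mul := by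
        rw [ht]; simp only [Category.assoc]
    _ = W.ε := by
        rw [leftUnitor_inv_whiskerRight_comp_whiskerLeft]; simp [A.one_mul]

lemma Cowreath.isPairingMorphism_comp_counit {t : W.X ⊗ W.X ⟶ A.X ⊗ W.X}
    (ht : (W.X ◁ W.ψ) ≫ (α_ W.X A.X W.X).inv ≫ (W.ψ ▷ W.X) ≫ (α_ A.X W.X W.X).hom ≫ (A.X ◁ t) ≫
      (α_ A.X A.X W.X).inv ≫ (A.mul ▷ W.X) =
      (α_ W.X W.X A.X).inv ≫ (t ▷ A.X) ≫ (α_ A.X W.X A.X).hom ≫ (A.X ◁ W.ψ) ≫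
      (α_ A.X A.X W.X).inv ≫ (A.mul ▷ W.X)) :
    W.IsPairingMorphism (t ≫ (A.X ◁ W.ε) ≫ A.mul) := by
  calc (α_ W.X W.X A.X).inv ≫ ((t ≫ (A.X ◁ W.ε) ≫ A.mul) ▷ A.X) ≫ A.mul
      = 𝟙 _ ⊗≫ (t ▷ A.X) ⊗≫ ((A.X ◁ W.ε) ▷ A.X) ⊗≫ ((A.mul ▷ A.X) ≫ A.mul) ⊗≫ 𝟙 _ := by
        monoidal
    _ = 𝟙 _ ⊗≫ (t ▷ A.X) ⊗≫ ((A.X ◁ W.ε) ▷ A.X) ⊗≫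
          ((α_ A.X A.X A.X).hom ≫ (A.X ◁ A.mul) ≫ A.mul) ⊗≫ 𝟙 _ := by rw [A.mul_assoc]
    _ = 𝟙 _ ⊗≫ (t ▷ A.X) ⊗≫ (A.X ◁ ((W.ε ▷ A.X) ≫ A.mul)) ⊗≫ A.mul ⊗≫ 𝟙 _ := by monoidal
    _ = 𝟙 _ ⊗≫ (t ▷ A.X) ⊗≫ (A.X ◁ (W.ψ ≫ (A.X ◁ W.ε) ≫ A.mul)) ⊗≫ A.mul ⊗≫ 𝟙 _ := by
        rw [← W.ε_compat]
    _ = 𝟙 _ ⊗≫ (t ▷ A.X) ⊗≫ (A.X ◁ W.ψ) ⊗≫ (A.X ◁ (A.X ◁ W.ε)) ⊗≫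
          ((α_ A.X A.X A.X).hom ≫ (A.X ◁ A.mul) ≫ A.mul) ⊗≫ 𝟙 _ := by monoidal
    _ = 𝟙 _ ⊗≫ (t ▷ A.X) ⊗≫ (A.X ◁ W.ψ) ⊗≫ (A.X ◁ (A.X ◁ W.ε)) ⊗≫
          ((A.mul ▷ A.X) ≫ A.mul) ⊗≫ 𝟙 _ := by rw [← A.mul_assoc]
    _ = 𝟙 _ ⊗≫ (t ▷ A.X) ⊗≫ (A.X ◁ W.ψ) ⊗≫ (((A.X ⊗ A.X) ◁ W.ε) ≫ (A.mul ▷ A.X)) ⊗≫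
          A.mul ⊗≫ 𝟙 _ := by monoidal
    _ = 𝟙 _ ⊗≫ (t ▷ A.X) ⊗≫ (A.X ◁ W.ψ) ⊗≫ ((A.mul ▷ W.X) ≫ (A.X ◁ W.ε)) ⊗≫
          A.mul ⊗≫ 𝟙 _ := by rw [whisker_exchange]
    _ = (α_ W.X W.X A.X).inv ≫ (t ▷ A.X) ≫ (α_ A.X W.X A.X).hom ≫ (A.X ◁ W.ψ) ≫
          (α_ A.X A.X W.X).inv ≫ (A.mul ▷ W.X) ≫ (A.X ◁ W.ε) ≫ A.mul := by monoidal
    _ = (W.X ◁ W.ψ) ≫ (α_ W.X A.X W.X).inv ≫ (W.ψ ▷ W.X) ≫ (α_ A.X W.X W.X).hom ≫ (A.X ◁ t) ≫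
          (α_ A.X A.X W.X).inv ≫ (A.mul ▷ W.X) ≫ (A.X ◁ W.ε) ≫ A.mul := by
        rw [← reassoc_of% ht]
    _ = 𝟙 _ ⊗≫ (W.X ◁ W.ψ) ⊗≫ (W.ψ ▷ W.X) ⊗≫ (A.X ◁ t) ⊗≫ ((A.mul ▷ W.X) ≫ (A.X ◁ W.ε)) ⊗≫
          A.mul ⊗≫ 𝟙 _ := by monoidal
    _ = 𝟙 _ ⊗≫ (W.X ◁ W.ψ) ⊗≫ (W.ψ ▷ W.X) ⊗≫ (A.X ◁ t) ⊗≫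
          (((A.X ⊗ A.X) ◁ W.ε) ≫ (A.mul ▷ A.X)) ⊗≫ A.mul ⊗≫ 𝟙 _ := by
        rw [← whisker_exchange]
    _ = 𝟙 _ ⊗≫ (W.X ◁ W.ψ) ⊗≫ (W.ψ ▷ W.X) ⊗≫ (A.X ◁ t) ⊗≫ (A.X ◁ (A.X ◁ W.ε)) ⊗≫
          ((A.mul ▷ A.X) ≫ A.mul) ⊗≫ 𝟙 _ := by monoidal
    _ = 𝟙 _ ⊗≫ (W.X ◁ W.ψ) ⊗≫ (W.ψ ▷ W.X) ⊗≫ (A.X ◁ t) ⊗≫ (A.X ◁ (A.X ◁ W.ε)) ⊗≫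
          ((α_ A.X A.X A.X).hom ≫ (A.X ◁ A.mul) ≫ A.mul) ⊗≫ 𝟙 _ := by rw [A.mul_assoc]
    _ = _ := by monoidal

lemma Cowreath.casimir_left_pairing_eq (t : W.X ⊗ W.X ⟶ A.X ⊗ W.X) :
    (W.δ ▷ W.X) ≫ (α_ A.X (W.X ⊗ W.X) W.X).hom ≫ (A.X ◁ (α_ W.X W.X W.X).hom) ≫
      (A.X ◁ (W.X ◁ (t ≫ (A.X ◁ W.ε) ≫ A.mul))) ≫ (A.X ◁ W.ψ) ≫ (α_ A.X A.X W.X).inv ≫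
      (A.mul ▷ W.X) =
    (((λ_ W.X).inv ≫ (A.one ▷ W.X)) ▷ W.X) ≫
      ((((A.X ◁ W.δ) ≫ (α_ A.X A.X (W.X ⊗ W.X)).inv ≫ (A.mul ▷ (W.X ⊗ W.X)) ≫
        (α_ A.X W.X W.X).inv)) ▷ W.X) ≫
      ((α_ (A.X ⊗ W.X) W.X W.X).hom ≫ ((A.X ⊗ W.X) ◁ t) ≫ (α_ (A.X ⊗ W.X) A.X W.X).inv ≫
        (((α_ A.X W.X A.X).hom ≫ (A.X ◁ W.ψ) ≫ (α_ A.X A.X W.X).inv ≫ (A.mul ▷ W.X)) ▷ W.X))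
      ≫ (((A.X ⊗ W.X) ◁ W.ε) ≫
        ((α_ A.X W.X A.X).hom ≫ (A.X ◁ W.ψ) ≫ (α_ A.X A.X W.X).inv ≫ (A.mul ▷ W.X))) := by
  calc (W.δ ▷ W.X) ≫ (α_ A.X (W.X ⊗ W.X) W.X).hom ≫ (A.X ◁ (α_ W.X W.X W.X).hom) ≫
      (A.X ◁ (W.X ◁ (t ≫ (A.X ◁ W.ε) ≫ A.mul))) ≫ (A.X ◁ W.ψ) ≫ (α_ A.X A.X W.X).inv ≫
      (A.mul ▷ W.X)
      = 𝟙 _ ⊗≫ (W.δ ▷ W.X) ⊗≫ (A.X ◁ (W.X ◁ t)) ⊗≫ (A.X ◁ (W.X ◁ (A.X ◁ W.ε))) ⊗≫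
          (A.X ◁ ((W.X ◁ A.mul) ≫ W.ψ)) ⊗≫ ((α_ A.X A.X W.X).inv ≫ (A.mul ▷ W.X)) := by
        monoidal
    _ = 𝟙 _ ⊗≫ (W.δ ▷ W.X) ⊗≫ (A.X ◁ (W.X ◁ t)) ⊗≫ (A.X ◁ (W.X ◁ (A.X ◁ W.ε))) ⊗≫
          (A.X ◁ ((α_ W.X A.X A.X).inv ≫ (W.ψ ▷ A.X) ≫ (α_ A.X W.X A.X).hom ≫
            (A.X ◁ W.ψ) ≫ (α_ A.X A.X W.X).inv ≫ (A.mul ▷ W.X))) ⊗≫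
          ((α_ A.X A.X W.X).inv ≫ (A.mul ▷ W.X)) := by rw [W.ψ_mul]
    _ = 𝟙 _ ⊗≫ (W.δ ▷ W.X) ⊗≫ (A.X ◁ (W.X ◁ t)) ⊗≫
          (A.X ◁ (((W.X ⊗ A.X) ◁ W.ε) ≫ (W.ψ ▷ A.X))) ⊗≫ (A.X ◁ (A.X ◁ W.ψ)) ⊗≫
          (A.X ◁ (A.mul ▷ W.X)) ⊗≫ ((α_ A.X A.X W.X).inv ≫ (A.mul ▷ W.X)) := by monoidal
    _ = 𝟙 _ ⊗≫ (W.δ ▷ W.X) ⊗≫ (A.X ◁ (W.X ◁ t)) ⊗≫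
          (A.X ◁ ((W.ψ ▷ W.X) ≫ ((A.X ⊗ W.X) ◁ W.ε))) ⊗≫ (A.X ◁ (A.X ◁ W.ψ)) ⊗≫
          (A.X ◁ (A.mul ▷ W.X)) ⊗≫ ((α_ A.X A.X W.X).inv ≫ (A.mul ▷ W.X)) := by
        rw [whisker_exchange]
    _ = 𝟙 _ ⊗≫ (W.δ ▷ W.X) ⊗≫ (A.X ◁ (W.X ◁ t)) ⊗≫ (A.X ◁ (W.ψ ▷ W.X)) ⊗≫
          (A.X ◁ ((A.X ⊗ W.X) ◁ W.ε)) ⊗≫ (A.X ◁ (A.X ◁ W.ψ)) ⊗≫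
          (((α_ A.X A.X A.X).hom ≫ (A.X ◁ A.mul) ≫ A.mul) ▷ W.X) ⊗≫ 𝟙 _ := by monoidal
    _ = 𝟙 _ ⊗≫ (W.δ ▷ W.X) ⊗≫ (A.X ◁ (W.X ◁ t)) ⊗≫ (A.X ◁ (W.ψ ▷ W.X)) ⊗≫
          (A.X ◁ ((A.X ⊗ W.X) ◁ W.ε)) ⊗≫ (A.X ◁ (A.X ◁ W.ψ)) ⊗≫
          (((A.mul ▷ A.X) ≫ A.mul) ▷ W.X) ⊗≫ 𝟙 _ := by rw [← A.mul_assoc]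
    _ = 𝟙 _ ⊗≫ (W.δ ▷ W.X) ⊗≫ (A.X ◁ (W.X ◁ t)) ⊗≫ (A.X ◁ (W.ψ ▷ W.X)) ⊗≫
          (((A.X ⊗ A.X) ◁ ((W.X ◁ W.ε) ≫ W.ψ)) ≫ (A.mul ▷ (A.X ⊗ W.X))) ⊗≫
          (A.mul ▷ W.X) ⊗≫ 𝟙 _ := by monoidal
    _ = 𝟙 _ ⊗≫ (W.δ ▷ W.X) ⊗≫ (A.X ◁ (W.X ◁ t)) ⊗≫ (A.X ◁ (W.ψ ▷ W.X)) ⊗≫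
          ((A.mul ▷ (W.X ⊗ W.X)) ≫ (A.X ◁ ((W.X ◁ W.ε) ≫ W.ψ))) ⊗≫ (A.mul ▷ W.X) ⊗≫ 𝟙 _ := by
        rw [whisker_exchange]
    _ = 𝟙 _ ⊗≫ (W.δ ▷ W.X) ⊗≫ (((A.one ▷ A.X) ≫ A.mul) ▷ ((W.X ⊗ W.X) ⊗ W.X)) ⊗≫
          (A.X ◁ (W.X ◁ t)) ⊗≫ (A.X ◁ (W.ψ ▷ W.X)) ⊗≫
          ((A.mul ▷ (W.X ⊗ W.X)) ≫ (A.X ◁ ((W.X ◁ W.ε) ≫ W.ψ))) ⊗≫ (A.mul ▷ W.X) ⊗≫ 𝟙 _ := by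
        rw [A.one_mul]; monoidal
    _ = (W.δ ▷ W.X) ≫ (λ_ ((A.X ⊗ (W.X ⊗ W.X)) ⊗ W.X)).inv ≫
          (A.one ▷ ((A.X ⊗ (W.X ⊗ W.X)) ⊗ W.X)) ≫
          (𝟙 _ ⊗≫ (A.mul ▷ ((W.X ⊗ W.X) ⊗ W.X)) ⊗≫ (A.X ◁ (W.X ◁ t)) ⊗≫
            (A.X ◁ (W.ψ ▷ W.X)) ⊗≫ ((A.mul ▷ (W.X ⊗ W.X)) ≫ (A.X ◁ ((W.X ◁ W.ε) ≫ W.ψ))) ⊗≫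
            (A.mul ▷ W.X) ⊗≫ 𝟙 _) := by monoidal
    _ = (λ_ (W.X ⊗ W.X)).inv ≫ (A.one ▷ (W.X ⊗ W.X)) ≫ (A.X ◁ (W.δ ▷ W.X)) ≫
          (𝟙 _ ⊗≫ (A.mul ▷ ((W.X ⊗ W.X) ⊗ W.X)) ⊗≫ (A.X ◁ (W.X ◁ t)) ⊗≫
            (A.X ◁ (W.ψ ▷ W.X)) ⊗≫ ((A.mul ▷ (W.X ⊗ W.X)) ≫ (A.X ◁ ((W.X ◁ W.ε) ≫ W.ψ))) ⊗≫
            (A.mul ▷ W.X) ⊗≫ 𝟙 _) := by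
        rw [reassoc_of% (leftUnitor_inv_whiskerRight_comp_whiskerLeft A.one (W.δ ▷ W.X))]
    _ = (((λ_ W.X).inv ≫ (A.one ▷ W.X)) ▷ W.X) ≫
          ((((A.X ◁ W.δ) ≫ (α_ A.X A.X (W.X ⊗ W.X)).inv ≫ (A.mul ▷ (W.X ⊗ W.X)) ≫
            (α_ A.X W.X W.X).inv)) ▷ W.X) ≫
          ((α_ (A.X ⊗ W.X) W.X W.X).hom ≫ ((A.X ⊗ W.X) ◁ t) ≫ (α_ (A.X ⊗ W.X) A.X W.X).inv ≫
            (((α_ A.X W.X A.X).hom ≫ (A.X ◁ W.ψ) ≫ (α_ A.X A.X W.X).inv ≫ (A.mul ▷ W.X)) ▷ W.X))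
          ≫ (((A.X ⊗ W.X) ◁ W.ε) ≫
            ((α_ A.X W.X A.X).hom ≫ (A.X ◁ W.ψ) ≫ (α_ A.X A.X W.X).inv ≫ (A.mul ▷ W.X))) := by
        monoidal

lemma Cowreath.casimir_right_pairing_eq (t : W.X ⊗ W.X ⟶ A.X ⊗ W.X) :
    (W.X ◁ W.δ) ≫ (α_ W.X A.X (W.X ⊗ W.X)).inv ≫ (W.ψ ▷ (W.X ⊗ W.X)) ≫
      (α_ A.X W.X (W.X ⊗ W.X)).hom ≫ (A.X ◁ (α_ W.X W.X W.X).inv) ≫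
      (A.X ◁ ((t ≫ (A.X ◁ W.ε) ≫ A.mul) ▷ W.X)) ≫ (α_ A.X A.X W.X).inv ≫ (A.mul ▷ W.X) =
    (((λ_ W.X).inv ≫ (A.one ▷ W.X)) ▷ W.X) ≫
      ((((A.X ⊗ W.X) ◁ W.δ) ≫ (α_ (A.X ⊗ W.X) A.X (W.X ⊗ W.X)).inv ≫
        (((α_ A.X W.X A.X).hom ≫ (A.X ◁ W.ψ) ≫ (α_ A.X A.X W.X).inv ≫ (A.mul ▷ W.X)) ▷
          (W.X ⊗ W.X)) ≫ (α_ (A.X ⊗ W.X) W.X W.X).inv) ≫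
      (((α_ A.X W.X W.X).hom ≫ (A.X ◁ t) ≫ (α_ A.X A.X W.X).inv ≫ (A.mul ▷ W.X)) ▷ W.X)) ≫
      (((A.X ◁ W.ε) ≫ A.mul) ▷ W.X) := by
  calc (W.X ◁ W.δ) ≫ (α_ W.X A.X (W.X ⊗ W.X)).inv ≫ (W.ψ ▷ (W.X ⊗ W.X)) ≫
      (α_ A.X W.X (W.X ⊗ W.X)).hom ≫
      (A.X ◁ (α_ W.X W.X W.X).inv) ≫ (A.X ◁ ((t ≫ (A.X ◁ W.ε) ≫ A.mul) ▷ W.X)) ≫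
      (α_ A.X A.X W.X).inv ≫ (A.mul ▷ W.X)
      = 𝟙 _ ⊗≫ (W.X ◁ W.δ) ⊗≫ (W.ψ ▷ (W.X ⊗ W.X)) ⊗≫ (A.X ◁ (t ▷ W.X)) ⊗≫
          (A.X ◁ ((A.X ◁ W.ε) ▷ W.X)) ⊗≫
          (((α_ A.X A.X A.X).hom ≫ (A.X ◁ A.mul) ≫ A.mul) ▷ W.X) ⊗≫ 𝟙 _ := by monoidal
    _ = 𝟙 _ ⊗≫ (W.X ◁ W.δ) ⊗≫ (W.ψ ▷ (W.X ⊗ W.X)) ⊗≫ (A.X ◁ (t ▷ W.X)) ⊗≫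
          (A.X ◁ ((A.X ◁ W.ε) ▷ W.X)) ⊗≫ (((A.mul ▷ A.X) ≫ A.mul) ▷ W.X) ⊗≫ 𝟙 _ := by
        rw [← A.mul_assoc]
    _ = 𝟙 _ ⊗≫ (W.X ◁ W.δ) ⊗≫ (W.ψ ▷ (W.X ⊗ W.X)) ⊗≫ (A.X ◁ (t ▷ W.X)) ⊗≫
          (((A.X ⊗ A.X) ◁ ((W.ε ▷ W.X))) ≫ (A.mul ▷ (A.X ⊗ W.X))) ⊗≫ (A.mul ▷ W.X) ⊗≫ 𝟙 _ := by
        monoidal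
    _ = 𝟙 _ ⊗≫ (W.X ◁ W.δ) ⊗≫ (W.ψ ▷ (W.X ⊗ W.X)) ⊗≫ (A.X ◁ (t ▷ W.X)) ⊗≫
          ((A.mul ▷ (W.X ⊗ W.X)) ≫ (A.X ◁ (W.ε ▷ W.X))) ⊗≫ (A.mul ▷ W.X) ⊗≫ 𝟙 _ := by
        rw [whisker_exchange]
    _ = 𝟙 _ ⊗≫ (W.X ◁ W.δ) ⊗≫ (W.ψ ▷ (W.X ⊗ W.X)) ⊗≫
          (((A.one ▷ A.X) ≫ A.mul) ▷ (W.X ⊗ (W.X ⊗ W.X))) ⊗≫ (A.X ◁ (t ▷ W.X)) ⊗≫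
          ((A.mul ▷ (W.X ⊗ W.X)) ≫ (A.X ◁ (W.ε ▷ W.X))) ⊗≫ (A.mul ▷ W.X) ⊗≫ 𝟙 _ := by
        rw [A.one_mul]; monoidal
    _ = ((W.X ◁ W.δ) ≫ (α_ W.X A.X (W.X ⊗ W.X)).inv ≫ (W.ψ ▷ (W.X ⊗ W.X)) ≫
          (α_ A.X W.X (W.X ⊗ W.X)).hom) ≫ (λ_ (A.X ⊗ (W.X ⊗ (W.X ⊗ W.X)))).inv ≫
          (A.one ▷ (A.X ⊗ (W.X ⊗ (W.X ⊗ W.X)))) ≫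
          (𝟙 _ ⊗≫ (A.mul ▷ (W.X ⊗ (W.X ⊗ W.X))) ⊗≫ (A.X ◁ (t ▷ W.X)) ⊗≫
            ((A.mul ▷ (W.X ⊗ W.X)) ≫ (A.X ◁ (W.ε ▷ W.X))) ⊗≫ (A.mul ▷ W.X) ⊗≫ 𝟙 _) := by
        monoidal
    _ = (λ_ (W.X ⊗ W.X)).inv ≫ (A.one ▷ (W.X ⊗ W.X)) ≫
          (A.X ◁ ((W.X ◁ W.δ) ≫ (α_ W.X A.X (W.X ⊗ W.X)).inv ≫ (W.ψ ▷ (W.X ⊗ W.X)) ≫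
            (α_ A.X W.X (W.X ⊗ W.X)).hom)) ≫
          (𝟙 _ ⊗≫ (A.mul ▷ (W.X ⊗ (W.X ⊗ W.X))) ⊗≫ (A.X ◁ (t ▷ W.X)) ⊗≫
            ((A.mul ▷ (W.X ⊗ W.X)) ≫ (A.X ◁ (W.ε ▷ W.X))) ⊗≫ (A.mul ▷ W.X) ⊗≫ 𝟙 _) := by
        rw [reassoc_of% (leftUnitor_inv_whiskerRight_comp_whiskerLeft A.one ((W.X ◁ W.δ) ≫
          (α_ W.X A.X (W.X ⊗ W.X)).inv ≫
          (W.ψ ▷ (W.X ⊗ W.X)) ≫ (α_ A.X W.X (W.X ⊗ W.X)).hom))]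
        simp only [Category.assoc]
    _ = (((λ_ W.X).inv ≫ (A.one ▷ W.X)) ▷ W.X) ≫
          ((((A.X ⊗ W.X) ◁ W.δ) ≫ (α_ (A.X ⊗ W.X) A.X (W.X ⊗ W.X)).inv ≫
            (((α_ A.X W.X A.X).hom ≫ (A.X ◁ W.ψ) ≫ (α_ A.X A.X W.X).inv ≫ (A.mul ▷ W.X)) ▷
              (W.X ⊗ W.X)) ≫ (α_ (A.X ⊗ W.X) W.X W.X).inv) ≫
          (((α_ A.X W.X W.X).hom ≫ (A.X ◁ t) ≫ (α_ A.X A.X W.X).inv ≫ (A.mul ▷ W.X)) ▷ W.X)) ≫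
          (((A.X ◁ W.ε) ≫ A.mul) ▷ W.X) := by monoidal

end Pairing

section RetractionCore

variable {A : Mon_ C} {W : Cowreath A}
variable (ϑ : forgetF A W ⋙ cofreeFunctor W ⟶ 𝟭 (Ent A W))

def retractionInducedHom (R : RMod A) : (R.carrier ⊗ W.X) ⊗ W.X ⟶ R.carrier ⊗ W.X :=
  (ϑ.app ((cofreeFunctor W).obj R)).hom

def retractionCore : W.X ⊗ W.X ⟶ A.X ⊗ W.X :=
  (((λ_ W.X).inv ≫ (A.one ▷ W.X)) ▷ W.X) ≫ retractionInducedHom ϑ (regMod A)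

lemma retractionInducedHom_eq (hgen : UnitIsLeftTensorGenerator C) (R : RMod A) :
    retractionInducedHom ϑ R = (α_ _ _ _).hom ≫ (R.carrier ◁ retractionCore ϑ) ≫
      (α_ _ _ _).inv ≫ (R.act ▷ W.X) :=
  eq_of_naturality_regMod hgen _ _ fun φ => by
    exact congrArg EntHom.hom (ϑ.naturality ((cofreeFunctor W).map φ))

lemma delta_comp_retractionCore (hgen : UnitIsLeftTensorGenerator C)
    (hϑ : (cofreeAdjunction W).unit ≫ ϑ = 𝟙 _) :
    W.δ ≫ (A.X ◁ retractionCore ϑ) ≫ (α_ A.X A.X W.X).inv ≫ (A.mul ▷ W.X) =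
      (λ_ W.X).inv ≫ (A.one ▷ W.X) := by
  set t := retractionCore ϑ
  have hsplit : ((A.X ◁ W.δ) ≫ (α_ A.X A.X (W.X ⊗ W.X)).inv ≫ (A.mul ▷ (W.X ⊗ W.X)) ≫
      (α_ A.X W.X W.X).inv) ≫ ((α_ A.X W.X W.X).hom ≫ (A.X ◁ t) ≫ (α_ A.X A.X W.X).inv ≫
      (A.mul ▷ W.X)) = 𝟙 (A.X ⊗ W.X) := by
    have h : (cofreeEnt W (regMod A)).coact ≫ retractionInducedHom ϑ (regMod A) = 𝟙 _ :=
      congrArg EntHom.hom (NatTrans.congr_app hϑ ((cofreeFunctor W).obj (regMod A)))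
    rw [retractionInducedHom_eq ϑ hgen] at h
    exact h
  calc W.δ ≫ (A.X ◁ t) ≫ (α_ A.X A.X W.X).inv ≫ (A.mul ▷ W.X)
      = W.δ ≫ (𝟙 _ ⊗≫ (((A.one ▷ A.X) ≫ A.mul) ▷ (W.X ⊗ W.X)) ⊗≫ (A.X ◁ t) ⊗≫
          ((α_ A.X A.X W.X).inv ≫ (A.mul ▷ W.X))) := by rw [A.one_mul]; monoidal
    _ = W.δ ≫ (λ_ (A.X ⊗ (W.X ⊗ W.X))).inv ≫ (A.one ▷ (A.X ⊗ (W.X ⊗ W.X))) ≫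
          (𝟙 _ ⊗≫ (A.mul ▷ (W.X ⊗ W.X)) ⊗≫ (A.X ◁ t) ⊗≫
          ((α_ A.X A.X W.X).inv ≫ (A.mul ▷ W.X))) := by congr 1; monoidal
    _ = ((λ_ W.X).inv ≫ (A.one ▷ W.X)) ≫ (((A.X ◁ W.δ) ≫ (α_ A.X A.X (W.X ⊗ W.X)).inv ≫
          (A.mul ▷ (W.X ⊗ W.X)) ≫ (α_ A.X W.X W.X).inv) ≫ ((α_ A.X W.X W.X).hom ≫
          (A.X ◁ t) ≫ (α_ A.X A.X W.X).inv ≫ (A.mul ▷ W.X))) := by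
        rw [← reassoc_of% (leftUnitor_inv_whiskerRight_comp_whiskerLeft A.one W.δ)]
        simp only [Category.assoc]; congr 3; monoidal
    _ = (λ_ W.X).inv ≫ (A.one ▷ W.X) := by rw [hsplit, Category.comp_id]

lemma retractionCore_linear (hgen : UnitIsLeftTensorGenerator C) :
    (W.X ◁ W.ψ) ≫ (α_ W.X A.X W.X).inv ≫ (W.ψ ▷ W.X) ≫ (α_ A.X W.X W.X).hom ≫
      (A.X ◁ retractionCore ϑ) ≫ (α_ A.X A.X W.X).inv ≫ (A.mul ▷ W.X) =
    (α_ W.X W.X A.X).inv ≫ (retractionCore ϑ ▷ A.X) ≫ (α_ A.X W.X A.X).hom ≫ (A.X ◁ W.ψ) ≫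
      (α_ A.X A.X W.X).inv ≫ (A.mul ▷ W.X) := by
  set t := retractionCore ϑ
  set Θ : (A.X ⊗ W.X) ⊗ W.X ⟶ A.X ⊗ W.X := retractionInducedHom ϑ (regMod A)
  have ht : (((λ_ W.X).inv ≫ (A.one ▷ W.X)) ▷ W.X) ≫ Θ = t := rfl
  have hS : Θ = (α_ A.X W.X W.X).hom ≫ (A.X ◁ t) ≫ (α_ A.X A.X W.X).inv ≫ (A.mul ▷ W.X) :=
    retractionInducedHom_eq ϑ hgen (regMod A)
  have Hlin : ((α_ (A.X ⊗ W.X) W.X A.X).hom ≫ ((A.X ⊗ W.X) ◁ W.ψ) ≫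
      (α_ (A.X ⊗ W.X) A.X W.X).inv ≫
      (((α_ A.X W.X A.X).hom ≫ (A.X ◁ W.ψ) ≫ (α_ A.X A.X W.X).inv ≫ (A.mul ▷ W.X)) ▷ W.X)) ≫ Θ =
      (Θ ▷ A.X) ≫ (α_ A.X W.X A.X).hom ≫ (A.X ◁ W.ψ) ≫ (α_ A.X A.X W.X).inv ≫ (A.mul ▷ W.X) :=
    (ϑ.app ((cofreeFunctor W).obj (regMod A))).linear
  rw [Category.assoc, Category.assoc, Category.assoc] at Hlin
  calc (W.X ◁ W.ψ) ≫ (α_ W.X A.X W.X).inv ≫ (W.ψ ▷ W.X) ≫ (α_ A.X W.X W.X).hom ≫ (A.X ◁ t) ≫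
      (α_ A.X A.X W.X).inv ≫ (A.mul ▷ W.X)
      = 𝟙 _ ⊗≫ (W.X ◁ W.ψ) ⊗≫ (W.ψ ▷ W.X) ⊗≫ (((A.one ▷ A.X) ≫ A.mul) ▷ (W.X ⊗ W.X)) ⊗≫
          (A.X ◁ t) ⊗≫ ((α_ A.X A.X W.X).inv ≫ (A.mul ▷ W.X)) := by
        rw [A.one_mul]; monoidal
    _ = ((W.X ◁ W.ψ) ≫ (α_ W.X A.X W.X).inv ≫ (W.ψ ▷ W.X) ≫ (α_ A.X W.X W.X).hom) ≫
          (λ_ (A.X ⊗ (W.X ⊗ W.X))).inv ≫ (A.one ▷ (A.X ⊗ (W.X ⊗ W.X))) ≫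
          (𝟙 _ ⊗≫ (A.mul ▷ (W.X ⊗ W.X)) ⊗≫ (A.X ◁ t) ⊗≫
            ((α_ A.X A.X W.X).inv ≫ (A.mul ▷ W.X))) := by monoidal
    _ = (λ_ (W.X ⊗ (W.X ⊗ A.X))).inv ≫ (A.one ▷ (W.X ⊗ (W.X ⊗ A.X))) ≫
          (A.X ◁ ((W.X ◁ W.ψ) ≫ (α_ W.X A.X W.X).inv ≫ (W.ψ ▷ W.X) ≫ (α_ A.X W.X W.X).hom)) ≫
          (𝟙 _ ⊗≫ (A.mul ▷ (W.X ⊗ W.X)) ⊗≫ (A.X ◁ t) ⊗≫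
            ((α_ A.X A.X W.X).inv ≫ (A.mul ▷ W.X))) := by
        rw [reassoc_of% (leftUnitor_inv_whiskerRight_comp_whiskerLeft A.one
          ((W.X ◁ W.ψ) ≫ (α_ W.X A.X W.X).inv ≫ (W.ψ ▷ W.X) ≫ (α_ A.X W.X W.X).hom))]
        simp only [Category.assoc]
    _ = (α_ W.X W.X A.X).inv ≫ ((((λ_ W.X).inv ≫ (A.one ▷ W.X)) ▷ W.X) ▷ A.X) ≫
          (α_ (A.X ⊗ W.X) W.X A.X).hom ≫ ((A.X ⊗ W.X) ◁ W.ψ) ≫ (α_ (A.X ⊗ W.X) A.X W.X).inv ≫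
          (((α_ A.X W.X A.X).hom ≫ (A.X ◁ W.ψ) ≫ (α_ A.X A.X W.X).inv ≫ (A.mul ▷ W.X)) ▷ W.X) ≫
          ((α_ A.X W.X W.X).hom ≫ (A.X ◁ t) ≫ (α_ A.X A.X W.X).inv ≫ (A.mul ▷ W.X)) := by
        monoidal
    _ = (α_ W.X W.X A.X).inv ≫ ((((λ_ W.X).inv ≫ (A.one ▷ W.X)) ▷ W.X) ▷ A.X) ≫
          (α_ (A.X ⊗ W.X) W.X A.X).hom ≫ ((A.X ⊗ W.X) ◁ W.ψ) ≫ (α_ (A.X ⊗ W.X) A.X W.X).inv ≫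
          (((α_ A.X W.X A.X).hom ≫ (A.X ◁ W.ψ) ≫ (α_ A.X A.X W.X).inv ≫ (A.mul ▷ W.X)) ▷ W.X) ≫
          Θ := by rw [← hS]
    _ = (α_ W.X W.X A.X).inv ≫ ((((λ_ W.X).inv ≫ (A.one ▷ W.X)) ▷ W.X) ▷ A.X) ≫ (Θ ▷ A.X) ≫
          (α_ A.X W.X A.X).hom ≫ (A.X ◁ W.ψ) ≫ (α_ A.X A.X W.X).inv ≫ (A.mul ▷ W.X) := by
        rw [Hlin]
    _ = (α_ W.X W.X A.X).inv ≫ (((((λ_ W.X).inv ≫ (A.one ▷ W.X)) ▷ W.X) ≫ Θ) ▷ A.X) ≫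
          (α_ A.X W.X A.X).hom ≫ (A.X ◁ W.ψ) ≫ (α_ A.X A.X W.X).inv ≫ (A.mul ▷ W.X) := by
        simp only [comp_whiskerRight, Category.assoc]
    _ = _ := by rw [ht]

lemma casimir_left_eq_retractionCore (hgen : UnitIsLeftTensorGenerator C) :
    (W.δ ▷ W.X) ≫ (α_ A.X (W.X ⊗ W.X) W.X).hom ≫ (A.X ◁ (α_ W.X W.X W.X).hom) ≫
      (A.X ◁ (W.X ◁ (retractionCore ϑ ≫ (A.X ◁ W.ε) ≫ A.mul))) ≫ (A.X ◁ W.ψ) ≫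
      (α_ A.X A.X W.X).inv ≫ (A.mul ▷ W.X) = retractionCore ϑ := by
  set t := retractionCore ϑ
  set Θ : (A.X ⊗ W.X) ⊗ W.X ⟶ A.X ⊗ W.X := retractionInducedHom ϑ (regMod A)
  have ht : (((λ_ W.X).inv ≫ (A.one ▷ W.X)) ▷ W.X) ≫ Θ = t := rfl
  set ΘF : ((A.X ⊗ W.X) ⊗ W.X) ⊗ W.X ⟶ (A.X ⊗ W.X) ⊗ W.X :=
    retractionInducedHom ϑ ((forgetF A W).obj (cofreeEnt W (regMod A)))
  have hSF : ΘF = (α_ (A.X ⊗ W.X) W.X W.X).hom ≫ ((A.X ⊗ W.X) ◁ t) ≫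
      (α_ (A.X ⊗ W.X) A.X W.X).inv ≫
      (((α_ A.X W.X A.X).hom ≫ (A.X ◁ W.ψ) ≫ (α_ A.X A.X W.X).inv ≫ (A.mul ▷ W.X)) ▷ W.X) :=
    retractionInducedHom_eq ϑ hgen _
  have hnat : (((A.X ◁ W.δ) ≫ (α_ A.X A.X (W.X ⊗ W.X)).inv ≫ (A.mul ▷ (W.X ⊗ W.X)) ≫
      (α_ A.X W.X W.X).inv) ▷ W.X) ≫ ΘF =
      Θ ≫ ((A.X ◁ W.δ) ≫ (α_ A.X A.X (W.X ⊗ W.X)).inv ≫ (A.mul ▷ (W.X ⊗ W.X)) ≫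
        (α_ A.X W.X W.X).inv) :=
    congrArg EntHom.hom (ϑ.naturality ((cofreeAdjunction W).unit.app
      ((cofreeFunctor W).obj (regMod A))))
  have hcounit : ((A.X ◁ W.δ) ≫ (α_ A.X A.X (W.X ⊗ W.X)).inv ≫ (A.mul ▷ (W.X ⊗ W.X)) ≫
      (α_ A.X W.X W.X).inv) ≫ ((A.X ⊗ W.X) ◁ W.ε) ≫
      ((α_ A.X W.X A.X).hom ≫ (A.X ◁ W.ψ) ≫ (α_ A.X A.X W.X).inv ≫ (A.mul ▷ W.X)) = 𝟙 _ :=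
    (cofreeEnt W (regMod A)).coact_counit
  rw [W.casimir_left_pairing_eq, ← hSF, reassoc_of% hnat, reassoc_of% ht]
  simpa using t ≫= hcounit

lemma casimir_right_eq_retractionCore (hgen : UnitIsLeftTensorGenerator C) :
    (W.X ◁ W.δ) ≫ (α_ W.X A.X (W.X ⊗ W.X)).inv ≫ (W.ψ ▷ (W.X ⊗ W.X)) ≫
      (α_ A.X W.X (W.X ⊗ W.X)).hom ≫ (A.X ◁ (α_ W.X W.X W.X).inv) ≫
      (A.X ◁ ((retractionCore ϑ ≫ (A.X ◁ W.ε) ≫ A.mul) ▷ W.X)) ≫ (α_ A.X A.X W.X).inv ≫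
      (A.mul ▷ W.X) = retractionCore ϑ := by
  set t := retractionCore ϑ
  set Θ : (A.X ⊗ W.X) ⊗ W.X ⟶ A.X ⊗ W.X := retractionInducedHom ϑ (regMod A)
  have ht : (((λ_ W.X).inv ≫ (A.one ▷ W.X)) ▷ W.X) ≫ Θ = t := rfl
  have hS : Θ = (α_ A.X W.X W.X).hom ≫ (A.X ◁ t) ≫ (α_ A.X A.X W.X).inv ≫ (A.mul ▷ W.X) :=
    retractionInducedHom_eq ϑ hgen (regMod A)
  have hcol : (((A.X ⊗ W.X) ◁ W.δ) ≫ (α_ (A.X ⊗ W.X) A.X (W.X ⊗ W.X)).inv ≫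
      (((α_ A.X W.X A.X).hom ≫ (A.X ◁ W.ψ) ≫ (α_ A.X A.X W.X).inv ≫ (A.mul ▷ W.X)) ▷
        (W.X ⊗ W.X)) ≫ (α_ (A.X ⊗ W.X) W.X W.X).inv) ≫ (Θ ▷ W.X) =
      Θ ≫ ((A.X ◁ W.δ) ≫ (α_ A.X A.X (W.X ⊗ W.X)).inv ≫ (A.mul ▷ (W.X ⊗ W.X)) ≫
        (α_ A.X W.X W.X).inv) :=
    (ϑ.app ((cofreeFunctor W).obj (regMod A))).colinear
  have hcounit : ((A.X ◁ W.δ) ≫ (α_ A.X A.X (W.X ⊗ W.X)).inv ≫ (A.mul ▷ (W.X ⊗ W.X)) ≫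
      (α_ A.X W.X W.X).inv) ≫ (((A.X ◁ W.ε) ≫ A.mul) ▷ W.X) = 𝟙 _ :=
    cofreeCoact_comp_counit_whiskerRight W (regMod A)
  rw [W.casimir_right_pairing_eq, ← hS, hcol, Category.assoc, reassoc_of% ht, hcounit,
    Category.comp_id]

lemma exists_casimir_of_unit_retraction (hgen : UnitIsLeftTensorGenerator C)
    (hϑ : (cofreeAdjunction W).unit ≫ ϑ = 𝟙 _) :
    ∃ B : W.X ⊗ W.X ⟶ A.X, W.IsPairingMorphism B ∧ W.IsCasimir B ∧
      W.δ ≫ (A.X ◁ B) ≫ A.mul = W.ε :=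
  ⟨retractionCore ϑ ≫ (A.X ◁ W.ε) ≫ A.mul,
    W.isPairingMorphism_comp_counit (retractionCore_linear ϑ hgen),
    (casimir_left_eq_retractionCore ϑ hgen).trans (casimir_right_eq_retractionCore ϑ hgen).symm,
    W.delta_comp_pairing_eq_counit (delta_comp_retractionCore ϑ hgen hϑ)⟩

end RetractionCore

/-- if `𝟙` is a left `⊗`-generator of `C`, the forgetful functor
`F : C(ψ)_A^X ⥤ C_A` is separable if and only if there is a Casimir morphism
`B : X ⊗ X ⟶ A` for `(X, ψ)` in `T_A^#` (a morphism `X ⊗ X → 𝟙` in `T_A^#` satisfying the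
Casimir condition (c) of Lemma 4.3) such that `m ∘ (A ⊗ B) ∘ δ = ε`. -/
theorem stmt18 (A : Mon_ C) (W : Cowreath A)
    (hgen : ∀ {Y Z P : C} (f g : Y ⊗ Z ⟶ P),
      (∀ h : 𝟙_ C ⟶ Y, (h ▷ Z) ≫ f = (h ▷ Z) ≫ g) → f = g) :
    FunctorSeparable (forgetF A W) ↔
    (∃ B : W.X ⊗ W.X ⟶ A.X,
      -- `B` is a morphism `X ⊗ X → 𝟙` in `T_A^#`
      ((α_ W.X W.X A.X).inv ≫ (B ▷ A.X) ≫ A.mul =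
        (W.X ◁ W.ψ) ≫ (α_ W.X A.X W.X).inv ≫ (W.ψ ▷ W.X) ≫
          (α_ A.X W.X W.X).hom ≫ (A.X ◁ B) ≫ A.mul) ∧
      -- the Casimir condition (c) with respect to `δ`
      ((W.δ ▷ W.X) ≫ (α_ A.X (W.X ⊗ W.X) W.X).hom ≫ (A.X ◁ (α_ W.X W.X W.X).hom) ≫
          (A.X ◁ (W.X ◁ B)) ≫ (A.X ◁ W.ψ) ≫ (α_ A.X A.X W.X).inv ≫ (A.mul ▷ W.X) =
        (W.X ◁ W.δ) ≫ (α_ W.X A.X (W.X ⊗ W.X)).inv ≫ (W.ψ ▷ (W.X ⊗ W.X)) ≫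
          (α_ A.X W.X (W.X ⊗ W.X)).hom ≫ (A.X ◁ (α_ W.X W.X W.X).inv) ≫
          (A.X ◁ (B ▷ W.X)) ≫ (α_ A.X A.X W.X).inv ≫ (A.mul ▷ W.X)) ∧
      -- the normalization condition `m ∘ (A ⊗ B) ∘ δ = ε`
      (W.δ ≫ (A.X ◁ B) ≫ A.mul = W.ε)) := by
  rw [functorSeparable_iff_exists_unit_retraction (cofreeAdjunction W)]
  constructor
  · rintro ⟨ϑ, hϑ⟩
    exact exists_casimir_of_unit_retraction ϑ hgen hϑ
  · rintro ⟨B, hB_lin, hB_casimir, hB_counit⟩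
    exact ⟨casimirRetraction hB_lin hB_casimir,
      unit_comp_casimirRetraction hB_lin hB_casimir hB_counit⟩
end
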